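/- arXiv:1108.3413 — 5 statements merged into one kernel-verified Lean document; each statement's English description precedes it below -/
import Mathlib

section
/- Let 0 < p ≤ 1 and let n be a natural number. Let X be a real-valued random variable with ℙ[X = t] = p(1−p)^{t−1} for each t ∈ {1,…,n} and ℙ[X = n + 1/p] = (1−p)^{n}. Then E[X] = 1/p and Var[X] ≤ 1/p^2. Consequently, the estimator n̂ = n − X + 1/p satisfies E[n̂] = n and Var[n̂] ≤ 1/p^2. -/
open MeasureTheory ProbabilityTheory


lemma geom_aux (p : ℝ) (n : ℕ) :
    ∑ t ∈ Finset.Icc 1 n, p * (1 - p) ^ (t - 1) = 1 - (1 - p) ^ n := by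
  induction n with
  | zero => simp
  | succ n ih =>
    rw [Finset.sum_Icc_succ_top (by omega : 1 ≤ n + 1), ih, Nat.add_sub_cancel]
    ring

lemma mean_aux (p : ℝ) (hp0 : p ≠ 0) (n : ℕ) :
    ∑ t ∈ Finset.Icc 1 n, (t : ℝ) * (p * (1 - p) ^ (t - 1))
      + ((n : ℝ) + 1 / p) * (1 - p) ^ n = 1 / p := by
  induction n with
  | zero => simp
  | succ n ih =>
    rw [Finset.sum_Icc_succ_top (by omega : 1 ≤ n + 1), Nat.add_sub_cancel]
    push_cast
    field_simp at ih ⊢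
    have hs : ∑ x ∈ Finset.Icc 1 n, p * (x : ℝ) * (1 - p) ^ (x - 1)
        = ∑ x ∈ Finset.Icc 1 n, (x : ℝ) * p * (1 - p) ^ (x - 1) :=
      Finset.sum_congr rfl fun _ _ => by ring
    linear_combination ih + p * hs

lemma sq_aux (p : ℝ) (hp0 : p ≠ 0) (n : ℕ) :
    ∑ t ∈ Finset.Icc 1 n, (t : ℝ) ^ 2 * (p * (1 - p) ^ (t - 1))
      + ((n : ℝ) + 1 / p) ^ 2 * (1 - p) ^ n
      = 1 / p ^ 2 + (1 - p) * (1 - (1 - p) ^ n) / p ^ 2 := by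
  induction n with
  | zero => simp
  | succ n ih =>
    rw [Finset.sum_Icc_succ_top (by omega : 1 ≤ n + 1), Nat.add_sub_cancel]
    push_cast
    field_simp at ih ⊢
    have hs : ∑ x ∈ Finset.Icc 1 n, p * (x : ℝ) ^ 2 * (1 - p) ^ (x - 1)
        = ∑ x ∈ Finset.Icc 1 n, (x : ℝ) ^ 2 * p * (1 - p) ^ (x - 1) :=
      Finset.sum_congr rfl fun _ _ => by ring
    linear_combination ih + p ^ 2 * hs


lemma key_aux {Ω : Type*} [MeasureSpace Ω]
    [IsProbabilityMeasure (ℙ : Measure Ω)]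
    (p : ℝ) (hp0 : 0 < p) (hp1 : p ≤ 1) (n : ℕ) (X : Ω → ℝ) (hX : Measurable X)
    (hpt : ∀ t ∈ Finset.Icc 1 n,
      ℙ {ω | X ω = (t : ℝ)} = ENNReal.ofReal (p * (1 - p) ^ (t - 1)))
    (hdef : ℙ {ω | X ω = (n : ℝ) + 1 / p} = ENNReal.ofReal ((1 - p) ^ n)) :
    (∀ᵐ ω ∂ℙ, X ω ∈ Set.Icc (0 : ℝ) ((n : ℝ) + 1 / p)) ∧
    ∀ u : ℝ → ℝ, ∫ ω, u (X ω) ∂ℙ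
      = (∑ t ∈ Finset.Icc 1 n, u t * (p * (1 - p) ^ (t - 1)))
        + u ((n : ℝ) + 1 / p) * (1 - p) ^ n := by
  have hq0 : (0 : ℝ) ≤ 1 - p := by linarith
  have hq1 : ∀ m : ℕ, (1 - p) ^ m ≤ 1 := fun m => pow_le_one₀ hq0 (by linarith)
  have hqn : ∀ m : ℕ, (0 : ℝ) ≤ (1 - p) ^ m := fun m => pow_nonneg hq0 m
  have hpq : ∀ t : ℕ, (0 : ℝ) ≤ p * (1 - p) ^ (t - 1) :=
    fun t => mul_nonneg hp0.le (hqn _)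
  set c : ℝ := (n : ℝ) + 1 / p with hc
  have hinv : (1 : ℝ) ≤ 1 / p := by
    rw [le_div_iff₀ hp0]; linarith
  have htc : ∀ t ∈ Finset.Icc 1 n, (t : ℝ) ≠ c := by
    intro t ht
    have h2 := (Finset.mem_Icc.mp ht).2
    have : (t : ℝ) ≤ n := by exact_mod_cast h2
    have : (t : ℝ) < c := by rw [hc]; linarith
    exact ne_of_lt this
  set A : ℕ → Set Ω := fun t => X ⁻¹' {(t : ℝ)} with hA
  set B : Set Ω := X ⁻¹' {c} with hB
  have hBdef : ℙ B = ENNReal.ofReal ((1 - p) ^ n) := hdef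
  have hAm : ∀ t, MeasurableSet (A t) := fun t => hX (measurableSet_singleton _)
  have hBm : MeasurableSet B := hX (measurableSet_singleton _)
  set E : Set Ω := B ∪ ⋃ t ∈ Finset.Icc 1 n, A t with hE
  have hEm : MeasurableSet E :=
    hBm.union (Finset.measurableSet_biUnion _ fun t _ => hAm t)
  -- measure of E is 1
  have hdisjAA : (↑(Finset.Icc 1 n) : Set ℕ).PairwiseDisjoint A := by
    intro s hs t ht hst
    simp only [Set.disjoint_left]
    intro ω hωs hωt
    apply hst
    have : ((s : ℕ) : ℝ) = t := by
      have h1 : X ω = (s : ℝ) := hωs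
      have h2 : X ω = (t : ℝ) := hωt
      rw [← h1, h2]
    exact_mod_cast this
  have hUA : ℙ (⋃ t ∈ Finset.Icc 1 n, A t)
      = ENNReal.ofReal (1 - (1 - p) ^ n) := by
    rw [measure_biUnion_finset hdisjAA fun t _ => hAm t]
    have : ∀ t ∈ Finset.Icc 1 n, ℙ (A t) = ENNReal.ofReal (p * (1 - p) ^ (t - 1)) :=
      fun t ht => hpt t ht
    rw [Finset.sum_congr rfl this, ← ENNReal.ofReal_sum_of_nonneg fun t _ => hpq t]
    congr 1
    exact geom_aux p n
  have hdisjBU : Disjoint B (⋃ t ∈ Finset.Icc 1 n, A t) := by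
    simp only [Set.disjoint_left]
    intro ω hωB hωU
    simp only [Set.mem_iUnion] at hωU
    obtain ⟨t, ht, hωt⟩ := hωU
    exact htc t ht (by rw [← hωt]; exact hωB)
  have hEone : ℙ E = 1 := by
    rw [hE, measure_union hdisjBU (Finset.measurableSet_biUnion _ fun t _ => hAm t),
      hUA, hBdef, ← ENNReal.ofReal_add (hqn n) (by nlinarith [hq1 n])]
    norm_num
  have hcompl : ℙ Eᶜ = 0 := by
    rw [measure_compl hEm (measure_ne_top _ _), hEone, measure_univ, tsub_self]
  have hae : ∀ᵐ ω ∂ℙ, ω ∈ E := by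
    rw [ae_iff]
    exact hcompl
  have hval : ∀ ω ∈ E, X ω = c ∨ ∃ t ∈ Finset.Icc 1 n, X ω = (t : ℝ) := by
    intro ω hω
    rcases hω with h | h
    · exact Or.inl h
    · simp only [Set.mem_iUnion] at h
      obtain ⟨t, ht, hωt⟩ := h
      exact Or.inr ⟨t, ht, hωt⟩
  constructor
  · filter_upwards [hae] with ω hω
    rcases hval ω hω with h | ⟨t, ht, h⟩
    · constructor
      · rw [h, hc]; positivity
      · rw [h]
    · have h1 := (Finset.mem_Icc.mp ht).1
      have h2 := (Finset.mem_Icc.mp ht).2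
      constructor
      · rw [h]; positivity
      · rw [h, hc]
        have : (t : ℝ) ≤ n := by exact_mod_cast h2
        linarith
  · intro u
    set F : Ω → ℝ := fun ω =>
      B.indicator (fun _ => u c) ω + ∑ t ∈ Finset.Icc 1 n, (A t).indicator (fun _ => u t) ω
      with hF
    have hFeq : (fun ω => u (X ω)) =ᵐ[ℙ] F := by
      filter_upwards [hae] with ω hω
      rcases hval ω hω with h | ⟨t, ht, h⟩
      · have hωB : ω ∈ B := h
        rw [hF]
        simp only
        rw [Set.indicator_of_mem hωB, Finset.sum_eq_zero, add_zero, h]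
        intro t ht'
        apply Set.indicator_of_notMem
        intro hmem
        exact htc t ht' (by rw [← (hmem : X ω = (t:ℝ))]; exact h)
      · have hωA : ω ∈ A t := h
        rw [hF]
        simp only
        rw [Set.indicator_of_notMem, zero_add,
          Finset.sum_eq_single_of_mem t ht, Set.indicator_of_mem hωA, h]
        · intro s hs hst
          apply Set.indicator_of_notMem
          intro hmem
          have : (s : ℝ) = (t : ℝ) := by
            rw [← (hmem : X ω = (s:ℝ)), h]
          exact hst (by exact_mod_cast this)
        · intro hmem
          exact htc t ht (by rw [← h]; exact hmem)
    rw [integral_congr_ae hFeq, hF]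
    have hintB : Integrable (B.indicator (fun _ => u c)) ℙ :=
      (integrable_const (u c)).indicator hBm
    have hintA : ∀ t ∈ Finset.Icc 1 n,
        Integrable ((A t).indicator (fun _ => u (t:ℕ))) ℙ :=
      fun t _ => (integrable_const _).indicator (hAm t)
    rw [integral_add hintB (integrable_finset_sum _ hintA),
      integral_finset_sum _ hintA, integral_indicator_const _ hBm]
    have h1 : ∀ t ∈ Finset.Icc 1 n,
        ∫ ω, (A t).indicator (fun _ => u (t:ℕ)) ω ∂ℙ = u t * (p * (1 - p) ^ (t - 1)) := by
      intro t ht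
      rw [integral_indicator_const _ (hAm t)]
      have : ℙ (A t) = ENNReal.ofReal (p * (1 - p) ^ (t - 1)) := hpt t ht
      rw [measureReal_def, this, smul_eq_mul, ENNReal.toReal_ofReal (hpq t), mul_comm]
    rw [Finset.sum_congr rfl h1]
    rw [measureReal_def, hBdef, smul_eq_mul, ENNReal.toReal_ofReal (hqn n), mul_comm]
    ring

/-- Lemma 1 of the paper (count-tracking estimator): if `X` is a truncated geometric
random variable with parameters `p` and `n`, i.e. `ℙ[X = t] = p(1−p)^{t−1}` for
`t = 1,…,n` and `ℙ[X = n + 1/p] = (1−p)^n`, then `E[X] = 1/p`, `Var[X] ≤ 1/p^2`, and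
the estimator `n̂ = n − X + 1/p` satisfies `E[n̂] = n` and `Var[n̂] ≤ 1/p^2`. -/
theorem truncated_geometric_estimator {Ω : Type*} [MeasureSpace Ω]
    [IsProbabilityMeasure (ℙ : Measure Ω)]
    (p : ℝ) (hp0 : 0 < p) (hp1 : p ≤ 1) (n : ℕ) (X : Ω → ℝ) (hX : Measurable X)
    (hpt : ∀ t ∈ Finset.Icc 1 n,
      ℙ {ω | X ω = (t : ℝ)} = ENNReal.ofReal (p * (1 - p) ^ (t - 1)))
    (hdef : ℙ {ω | X ω = (n : ℝ) + 1 / p} = ENNReal.ofReal ((1 - p) ^ n)) :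
    (∫ ω, X ω ∂ℙ) = 1 / p ∧ variance X ℙ ≤ 1 / p ^ 2 ∧
    (∫ ω, ((n : ℝ) - X ω + 1 / p) ∂ℙ) = n ∧
    variance (fun ω => (n : ℝ) - X ω + 1 / p) ℙ ≤ 1 / p ^ 2 := by
  obtain ⟨hbd, key⟩ := key_aux p hp0 hp1 n X hX hpt hdef
  have hq0 : (0 : ℝ) ≤ 1 - p := by linarith
  have hq1 : (1 - p) ^ n ≤ 1 := pow_le_one₀ hq0 (by linarith)
  have hqn : (0 : ℝ) ≤ (1 - p) ^ n := pow_nonneg hq0 n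
  have hp2 : (0 : ℝ) < p ^ 2 := by positivity
  have hmem2 : MemLp X 2 ℙ := memLp_of_bounded hbd hX.aestronglyMeasurable 2
  have hInt : Integrable X ℙ := hmem2.integrable (by norm_num)
  have hInt2 : Integrable (fun ω => X ω ^ 2) ℙ := by
    have := hmem2.integrable_sq
    simpa [sq] using this
  have hEX : (∫ ω, X ω ∂ℙ) = 1 / p := by
    have h := key (fun x => x)
    rw [h]
    exact mean_aux p hp0.ne' n
  have hEX2 : (∫ ω, X ω ^ 2 ∂ℙ)
      = 1 / p ^ 2 + (1 - p) * (1 - (1 - p) ^ n) / p ^ 2 := by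
    have h := key (fun x => x ^ 2)
    rw [h]
    exact sq_aux p hp0.ne' n
  have hvbound : (1 - p) * (1 - (1 - p) ^ n) / p ^ 2 ≤ 1 / p ^ 2 := by
    gcongr
    nlinarith
  have hvarX : variance X ℙ = (1 - p) * (1 - (1 - p) ^ n) / p ^ 2 := by
    rw [variance_eq_sub hmem2]
    have hpow : (∫ ω, (X ^ 2) ω ∂ℙ) = (∫ ω, X ω ^ 2 ∂ℙ) := by
      simp only [Pi.pow_apply]
    rw [hpow, hEX2, hEX]
    ring
  set a : ℝ := (n : ℝ) + 1 / p with ha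
  have hfun : (fun ω => (n : ℝ) - X ω + 1 / p) = (fun ω => a - X ω) := by
    funext ω; rw [ha]; ring
  have hEY : (∫ ω, (a - X ω) ∂ℙ) = (n : ℝ) := by
    rw [integral_sub (integrable_const a) hInt, integral_const, hEX, measureReal_def, measure_univ]
    simp [ha]
  have hmemY : MemLp (fun ω => a - X ω) 2 ℙ := (memLp_const a).sub hmem2
  have hvarY : variance (fun ω => a - X ω) ℙ = (1 - p) * (1 - (1 - p) ^ n) / p ^ 2 := by
    rw [variance_eq_sub hmemY]
    have hpow : (∫ ω, ((fun ω => a - X ω) ^ 2) ω ∂ℙ)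
        = (∫ ω, (X ω ^ 2 - 2 * a * X ω + a ^ 2) ∂ℙ) := by
      apply integral_congr_ae
      filter_upwards with ω
      simp only [Pi.pow_apply]
      ring
    have hint3 : Integrable (fun ω => 2 * a * X ω) ℙ := hInt.const_mul (2 * a)
    have hsplit : (∫ ω, (X ω ^ 2 - 2 * a * X ω + a ^ 2) ∂ℙ)
        = (∫ ω, X ω ^ 2 ∂ℙ) - 2 * a * (∫ ω, X ω ∂ℙ) + a ^ 2 := by
      have h1 : (∫ ω, (X ω ^ 2 - 2 * a * X ω + a ^ 2) ∂ℙ)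
          = (∫ ω, (X ω ^ 2 - 2 * a * X ω) ∂ℙ) + ∫ _, a ^ 2 ∂ℙ :=
        integral_add (hInt2.sub hint3) (integrable_const _)
      have h2 : (∫ ω, (X ω ^ 2 - 2 * a * X ω) ∂ℙ)
          = (∫ ω, X ω ^ 2 ∂ℙ) - ∫ ω, 2 * a * X ω ∂ℙ :=
        integral_sub hInt2 hint3
      rw [h1, h2, integral_const_mul, integral_const, measureReal_def, measure_univ]
      simp
    have hEYpow : (∫ ω, (fun ω => a - X ω) ω ∂ℙ) = (n : ℝ) := hEY
    rw [hpow, hsplit, hEX, hEX2, hEYpow, ha]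
    field_simp
    ring
  refine ⟨hEX, by rw [hvarX]; exact hvbound, ?_, ?_⟩
  · calc (∫ ω, ((n : ℝ) - X ω + 1 / p) ∂ℙ) = (∫ ω, (a - X ω) ∂ℙ) := by
          apply integral_congr_ae; filter_upwards with ω; rw [ha]; ring
      _ = n := hEY
  · rw [hfun, hvarY]
    exact hvbound
end

section
/- Let 0 < p ≤ 1 and let f ≥ 1 be a natural number. Let B_1, …, B_f be independent Bernoulli(p) random variables. Define X_1 = min{t : B_t = 1} if some B_t = 1 and X_1 = f + 1/p otherwise; define X_2 = min{t : B_{f+1−t} = 1} if some B_t = 1 and X_2 = f + 1/p otherwise. Define f̂ = f − X_1 − X_2 + 2/p. Then E[f̂] = f. -/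
open MeasureTheory ProbabilityTheory

/-- The position (1-indexed) of the first success among the trials `B 0, …, B (f-1)`
at sample point `ω`, with default value `f + 1/p` when there is no success. -/
noncomputable def firstSuccess {Ω : Type*} (f : ℕ) (p : ℝ) (B : Fin f → Ω → Bool)
    (ω : Ω) : ℝ :=
  if h : (Finset.univ.filter fun t => B t ω = true).Nonempty then
    (((Finset.univ.filter fun t => B t ω = true).min' h : ℕ) : ℝ) + 1
  else (f : ℝ) + 1 / p

lemma firstSuccess_decomp {Ω : Type*} (f : ℕ) (p : ℝ) (B : Fin f → Ω → Bool) (ω : Ω) :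
    firstSuccess f p B ω
      = 1 + (∑ k : Fin f, if ∀ j ≤ k, B j ω = false then (1 : ℝ) else 0)
        + (if ∀ j, B j ω = false then 1 / p - 1 else 0) := by
  unfold firstSuccess
  by_cases h : (Finset.univ.filter fun t => B t ω = true).Nonempty
  · rw [dif_pos h]
    set i := (Finset.univ.filter fun t => B t ω = true).min' h with hi
    have hiB : B i ω = true := by
      have := Finset.min'_mem _ h
      rw [Finset.mem_filter] at this
      exact this.2
    have hcond : ∀ k : Fin f, (∀ j ≤ k, B j ω = false) ↔ k < i := by
      intro k
      constructor
      · intro hk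
        by_contra hlt
        push_neg at hlt
        have := hk i hlt
        simp [hiB] at this
      · intro hk j hj
        by_contra hB
        have hBj : B j ω = true := by
          cases hB' : B j ω
          · exact absurd hB' hB
          · rfl
        have : i ≤ j := Finset.min'_le _ j (by simp [hBj])
        exact absurd (lt_of_le_of_lt (this.trans hj) hk) (lt_irrefl i)
    have hsum : (∑ k : Fin f, if ∀ j ≤ k, B j ω = false then (1 : ℝ) else 0)
        = (i : ℕ) := by
      have : ∀ k : Fin f, (if ∀ j ≤ k, B j ω = false then (1 : ℝ) else 0)
          = if k < i then (1 : ℝ) else 0 := by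
        intro k; simp only [hcond k]
      rw [Finset.sum_congr rfl fun k _ => this k, Finset.sum_boole]
      have : Finset.univ.filter (fun k : Fin f => k < i) = Finset.Iio i := by
        ext k; simp
      rw [this, Fin.card_Iio]
    have hlast : ¬ (∀ j, B j ω = false) := by
      intro hall
      have := hall i
      simp [hiB] at this
    rw [hsum, if_neg hlast]
    ring
  · rw [dif_neg h]
    have hall : ∀ j, B j ω = false := by
      intro j
      cases hB : B j ω
      · rfl
      · exact absurd (Finset.nonempty_of_ne_empty (Finset.ne_empty_of_mem
          (Finset.mem_filter.mpr ⟨Finset.mem_univ j, hB⟩))) h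
    have hsum : (∑ k : Fin f, if ∀ j ≤ k, B j ω = false then (1 : ℝ) else 0)
        = (f : ℝ) := by
      rw [Finset.sum_congr rfl fun k _ => if_pos (fun j _ => hall j)]
      simp
    rw [hsum, if_pos hall]
    ring

lemma geom_alg (p : ℝ) (hp : p ≠ 0) (f : ℕ) :
    1 + (∑ k ∈ Finset.range f, (1 - p) ^ (k + 1)) + (1 / p - 1) * (1 - p) ^ f
      = 1 / p := by
  induction f with
  | zero => field_simp; simp only [Finset.range_zero, Finset.sum_empty]; ring
  | succ n ih =>
    rw [Finset.sum_range_succ, pow_succ]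
    field_simp at ih ⊢
    ring_nf at ih ⊢
    linarith [ih]

lemma aux_integral {Ω : Type*} [MeasureSpace Ω] [IsProbabilityMeasure (ℙ : Measure Ω)]
    (p : ℝ) (hp0 : 0 < p) (hp1 : p ≤ 1) (f : ℕ) (B : Fin f → Ω → Bool)
    (hmeas : ∀ t, Measurable (B t))
    (hP : ∀ s : Finset (Fin f), ℙ (⋂ j ∈ s, {ω | B j ω = false})
      = ENNReal.ofReal ((1 - p) ^ s.card)) :
    Integrable (firstSuccess f p B) ℙ ∧
      (∫ ω, firstSuccess f p B ω ∂ℙ) = 1 / p := by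
  have hq0 : (0 : ℝ) ≤ 1 - p := by linarith
  -- measurable sets
  have hSmeas : ∀ s : Finset (Fin f), MeasurableSet (⋂ j ∈ s, {ω | B j ω = false}) := by
    intro s
    refine MeasurableSet.biInter s.countable_toSet fun j _ => ?_
    exact (hmeas j) (measurableSet_singleton false)
  have hSk : ∀ k : Fin f, {ω : Ω | ∀ j ≤ k, B j ω = false}
      = ⋂ j ∈ Finset.Iic k, {ω | B j ω = false} := by
    intro k; ext ω; simp [Set.mem_iInter]
  have hSf : {ω : Ω | ∀ j, B j ω = false}
      = ⋂ j ∈ (Finset.univ : Finset (Fin f)), {ω | B j ω = false} := by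
    ext ω; simp [Set.mem_iInter]
  -- rewrite firstSuccess as sum of indicators
  have hfun : ∀ ω, firstSuccess f p B ω
      = 1 + (∑ k : Fin f,
          ({ω : Ω | ∀ j ≤ k, B j ω = false}).indicator (fun _ => (1 : ℝ)) ω)
        + ({ω : Ω | ∀ j, B j ω = false}).indicator (fun _ => 1 / p - 1) ω := by
    intro ω
    rw [firstSuccess_decomp]
    congr 1
    · congr 1
      refine Finset.sum_congr rfl fun k _ => ?_
      simp [Set.indicator_apply, Set.mem_setOf_eq]
    · simp [Set.indicator_apply, Set.mem_setOf_eq]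
  have hintk : ∀ k : Fin f,
      Integrable (({ω : Ω | ∀ j ≤ k, B j ω = false}).indicator (fun _ => (1 : ℝ))) ℙ := by
    intro k
    exact (integrable_const (1 : ℝ)).indicator (hSk k ▸ hSmeas (Finset.Iic k))
  have hintf :
      Integrable (({ω : Ω | ∀ j, B j ω = false}).indicator (fun _ => 1 / p - 1)) ℙ :=
    (integrable_const (1 / p - 1)).indicator (hSf ▸ hSmeas Finset.univ)
  have hintsum : Integrable (fun ω => 1 + (∑ k : Fin f,
          ({ω : Ω | ∀ j ≤ k, B j ω = false}).indicator (fun _ => (1 : ℝ)) ω)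
        + ({ω : Ω | ∀ j, B j ω = false}).indicator (fun _ => 1 / p - 1) ω) ℙ :=
    ((integrable_const (1 : ℝ)).add (integrable_finset_sum _ fun k _ => hintk k)).add hintf
  have hint : Integrable (firstSuccess f p B) ℙ :=
    hintsum.congr (Filter.Eventually.of_forall fun ω => (hfun ω).symm)
  refine ⟨hint, ?_⟩
  have hI12 : Integrable (fun ω => (1 : ℝ) + ∑ k : Fin f,
      ({ω : Ω | ∀ j ≤ k, B j ω = false}).indicator (fun _ => (1 : ℝ)) ω) ℙ :=
    (integrable_const (1 : ℝ)).add (integrable_finset_sum _ fun k _ => hintk k)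
  have hIs : Integrable (fun ω => ∑ k : Fin f,
      ({ω : Ω | ∀ j ≤ k, B j ω = false}).indicator (fun _ => (1 : ℝ)) ω) ℙ :=
    integrable_finset_sum _ fun k _ => hintk k
  rw [integral_congr_ae (Filter.Eventually.of_forall hfun)]
  rw [integral_add hI12 hintf,
      integral_add (integrable_const (1 : ℝ)) hIs,
      integral_finset_sum _ fun k _ => hintk k]
  have hIk : ∀ k : Fin f,
      (∫ ω, ({ω : Ω | ∀ j ≤ k, B j ω = false}).indicator (fun _ => (1 : ℝ)) ω ∂ℙ)
        = (1 - p) ^ ((k : ℕ) + 1) := by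
    intro k
    rw [integral_indicator_const (1 : ℝ) (hSk k ▸ hSmeas (Finset.Iic k))]
    rw [hSk k, measureReal_def, hP (Finset.Iic k), Fin.card_Iic]
    simp [ENNReal.toReal_ofReal (pow_nonneg hq0 _)]
  have hIf : (∫ ω, ({ω : Ω | ∀ j, B j ω = false}).indicator (fun _ => 1 / p - 1) ω ∂ℙ)
      = (1 / p - 1) * (1 - p) ^ f := by
    rw [integral_indicator_const (1 / p - 1) (hSf ▸ hSmeas Finset.univ)]
    rw [hSf, measureReal_def, hP Finset.univ]
    simp [ENNReal.toReal_ofReal (pow_nonneg hq0 _), Finset.card_univ, mul_comm]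
  rw [Finset.sum_congr rfl fun k _ => hIk k, hIf, integral_const]
  simp only [measure_univ, probReal_univ, ENNReal.toReal_one, smul_eq_mul, one_mul]
  rw [Fin.sum_univ_eq_sum_range (fun k => (1 - p) ^ (k + 1)) f]
  exact geom_alg p hp0.ne' f

/-- Unbiasedness of the frequency estimator: for independent Bernoulli(`p`) trials
`B_1, …, B_f`, letting `X_1` be the first-success position (default `f + 1/p`) and
`X_2` the first-success position in reverse order (default `f + 1/p`), the estimator
`f̂ = f − X_1 − X_2 + 2/p` satisfies `E[f̂] = f`. -/
theorem frequency_estimator_unbiased {Ω : Type*} [MeasureSpace Ω]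
    [IsProbabilityMeasure (ℙ : Measure Ω)]
    (p : ℝ) (hp0 : 0 < p) (hp1 : p ≤ 1) (f : ℕ) (hf : 1 ≤ f)
    (B : Fin f → Ω → Bool) (hmeas : ∀ t, Measurable (B t))
    (hindep : iIndepFun B ℙ)
    (hber : ∀ t, ℙ {ω | B t ω = true} = ENNReal.ofReal p) :
    (∫ ω, ((f : ℝ) - firstSuccess f p B ω
        - firstSuccess f p (fun t => B t.rev) ω + 2 / p) ∂ℙ) = f := by
  have hq0 : (0 : ℝ) ≤ 1 - p := by linarith
  -- single-trial failure probability
  have hfalse : ∀ t, ℙ {ω | B t ω = false} = ENNReal.ofReal (1 - p) := by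
    intro t
    have hcompl : {ω | B t ω = false} = {ω | B t ω = true}ᶜ := by
      ext ω; cases h : B t ω <;> simp [h]
    have hm : MeasurableSet {ω : Ω | B t ω = true} :=
      (hmeas t) (measurableSet_singleton true)
    rw [hcompl, measure_compl hm (measure_ne_top _ _), hber t, measure_univ]
    rw [← ENNReal.ofReal_one, ← ENNReal.ofReal_sub 1 hp0.le]
  -- intersection probabilities
  have hP : ∀ s : Finset (Fin f), ℙ (⋂ j ∈ s, {ω | B j ω = false})
      = ENNReal.ofReal ((1 - p) ^ s.card) := by
    intro s
    have := hindep.meas_biInter (S := s) (s := fun j => {ω | B j ω = false})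
      (fun j _ => ⟨{false}, trivial, rfl⟩)
    rw [this]
    rw [Finset.prod_congr rfl fun j _ => hfalse j, Finset.prod_const,
      ← ENNReal.ofReal_pow hq0]
  have hP' : ∀ s : Finset (Fin f), ℙ (⋂ j ∈ s, {ω | B j.rev ω = false})
      = ENNReal.ofReal ((1 - p) ^ s.card) := by
    intro s
    have himg : (⋂ j ∈ s, {ω : Ω | B j.rev ω = false})
        = ⋂ j ∈ s.image Fin.rev, {ω | B j ω = false} := by
      ext ω
      simp only [Set.mem_iInter, Finset.mem_image]
      constructor
      · rintro h j ⟨i, hi, rfl⟩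
        exact h i hi
      · intro h i hi
        exact h i.rev ⟨i, hi, rfl⟩
    rw [himg, hP, Finset.card_image_of_injective s Fin.rev_injective]
  obtain ⟨hint1, hI1⟩ := aux_integral p hp0 hp1 f B hmeas hP
  obtain ⟨hint2, hI2⟩ := aux_integral p hp0 hp1 f (fun t => B t.rev)
    (fun t => hmeas t.rev) hP'
  have hc1 : Integrable (fun ω => (f : ℝ) - firstSuccess f p B ω) ℙ :=
    (integrable_const _).sub hint1
  have hc2 : Integrable (fun ω => (f : ℝ) - firstSuccess f p B ω
      - firstSuccess f p (fun t => B t.rev) ω) ℙ := hc1.sub hint2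
  rw [integral_add hc2 (integrable_const (2 / p))]
  rw [integral_sub hc1 hint2, integral_sub (integrable_const ((f : ℝ))) hint1]
  rw [hI1, hI2, integral_const, integral_const]
  simp only [measure_univ, probReal_univ, ENNReal.toReal_one, one_smul]
  ring
end

section
/- For every real number p with 0 < p < 1 and every natural number f ≥ 1, the following inequality holds: ∑_{t=1}^{f} (1−p)^{t−1} p t · [ (1−p)^{f−t} (f−t+1) + ∑_{l=1}^{f−t} (1−p)^{l−1} p l ] + (1−p)^{f} (f + 1/p)^2 ≤ 1/p^2 + (1−p)^{f} f^2 + (1−p)^{f} f / p. -/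
private lemma geomA (p : ℝ) : ∀ m : ℕ,
    p * ((∑ l ∈ Finset.Icc 1 m, (1 - p) ^ (l - 1) * p * (l : ℝ))
      + (1 - p) ^ m * ((m : ℝ) + 1)) = 1 - (1 - p) ^ (m + 1) := by
  intro m
  induction m with
  | zero => simp
  | succ n ih =>
    rw [Finset.sum_Icc_succ_top (Nat.le_add_left 1 n)]
    push_cast
    linear_combination ih

private lemma geomB (p : ℝ) : ∀ f : ℕ,
    p ^ 2 * (∑ t ∈ Finset.Icc 1 f, (1 - p) ^ (t - 1) * (t : ℝ))
      = 1 - (1 - p) ^ f - (f : ℝ) * p * (1 - p) ^ f := by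
  intro f
  induction f with
  | zero => simp
  | succ n ih =>
    rw [Finset.sum_Icc_succ_top (Nat.le_add_left 1 n)]
    push_cast
    linear_combination ih

/-- The key algebraic inequality in the bound of `E[X₁X₂]` for the
frequency-tracking estimator: for `0 < p < 1` and a natural number `f ≥ 1`,
`∑_{t=1}^{f} (1−p)^{t−1} p t [ (1−p)^{f−t}(f−t+1) + ∑_{l=1}^{f−t} (1−p)^{l−1} p l ]
  + (1−p)^f (f + 1/p)^2 ≤ 1/p^2 + (1−p)^f f^2 + (1−p)^f f / p`. -/
theorem expectation_product_bound (p : ℝ) (hp0 : 0 < p) (hp1 : p < 1)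
    (f : ℕ) (hf : 1 ≤ f) :
    (∑ t ∈ Finset.Icc 1 f, (1 - p) ^ (t - 1) * p * (t : ℝ) *
        ((1 - p) ^ (f - t) * ((f : ℝ) - (t : ℝ) + 1)
          + ∑ l ∈ Finset.Icc 1 (f - t), (1 - p) ^ (l - 1) * p * (l : ℝ)))
      + (1 - p) ^ f * ((f : ℝ) + 1 / p) ^ 2
    ≤ 1 / p ^ 2 + (1 - p) ^ f * (f : ℝ) ^ 2 + (1 - p) ^ f * (f : ℝ) / p := by
  have hq0 : (0 : ℝ) < 1 - p := by linarith
  -- Step 1: bound each summand by (1-p)^(t-1) * t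
  have hsum : (∑ t ∈ Finset.Icc 1 f, (1 - p) ^ (t - 1) * p * (t : ℝ) *
        ((1 - p) ^ (f - t) * ((f : ℝ) - (t : ℝ) + 1)
          + ∑ l ∈ Finset.Icc 1 (f - t), (1 - p) ^ (l - 1) * p * (l : ℝ)))
      ≤ ∑ t ∈ Finset.Icc 1 f, (1 - p) ^ (t - 1) * (t : ℝ) := by
    apply Finset.sum_le_sum
    intro t ht
    rw [Finset.mem_Icc] at ht
    have hcast : ((f - t : ℕ) : ℝ) = (f : ℝ) - t := by
      rw [Nat.cast_sub ht.2]
    have hA := geomA p (f - t)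
    have hbr : ((1 - p) ^ (f - t) * ((f : ℝ) - (t : ℝ) + 1)
          + ∑ l ∈ Finset.Icc 1 (f - t), (1 - p) ^ (l - 1) * p * (l : ℝ)) ≤ 1 / p := by
      rw [← hcast]
      rw [le_div_iff₀ hp0]
      have hpow : (0 : ℝ) ≤ (1 - p) ^ (f - t + 1) := by positivity
      nlinarith [hA]
    have hnn : (0 : ℝ) ≤ (1 - p) ^ (t - 1) * p * (t : ℝ) := by positivity
    calc (1 - p) ^ (t - 1) * p * (t : ℝ) *
        ((1 - p) ^ (f - t) * ((f : ℝ) - (t : ℝ) + 1)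
          + ∑ l ∈ Finset.Icc 1 (f - t), (1 - p) ^ (l - 1) * p * (l : ℝ))
        ≤ (1 - p) ^ (t - 1) * p * (t : ℝ) * (1 / p) := by
          exact mul_le_mul_of_nonneg_left hbr hnn
      _ = (1 - p) ^ (t - 1) * (t : ℝ) := by field_simp
  have hB := geomB p f
  have hS : (∑ t ∈ Finset.Icc 1 f, (1 - p) ^ (t - 1) * (t : ℝ))
      = (1 - (1 - p) ^ f - (f : ℝ) * p * (1 - p) ^ f) / p ^ 2 := by
    field_simp
    linarith [hB]
  -- combine
  have key : (1 - (1 - p) ^ f - (f : ℝ) * p * (1 - p) ^ f) / p ^ 2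
      + (1 - p) ^ f * ((f : ℝ) + 1 / p) ^ 2
      = 1 / p ^ 2 + (1 - p) ^ f * (f : ℝ) ^ 2 + (1 - p) ^ f * (f : ℝ) / p := by
    field_simp
    ring
  linarith [hsum, hS ▸ hsum, key]
end

section
/- For every real number p with 0 < p ≤ 1 and every natural number f, the following inequality holds: (1−p)^{f} f^2 + (1−p)^{f} f / p ≤ 6 / p^2. -/
/-- For `0 < p ≤ 1` and any natural number `f`,
`(1−p)^f f^2 + (1−p)^f f / p ≤ 6 / p^2`. -/
theorem tail_terms_bound (p : ℝ) (hp0 : 0 < p) (hp1 : p ≤ 1) (f : ℕ) :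
    (1 - p) ^ f * (f : ℝ) ^ 2 + (1 - p) ^ f * (f : ℝ) / p ≤ 6 / p ^ 2 := by
  have h1p : (0:ℝ) ≤ 1 - p := by linarith
  have hf0 : (0:ℝ) ≤ (f:ℝ) := Nat.cast_nonneg f
  set c : ℝ := p * f with hc
  have hc0 : 0 ≤ c := by positivity
  rcases le_or_gt c 2 with h | h
  · -- small case: f ≤ 2/p
    have hfle : (f:ℝ) ≤ 2 / p := by
      rw [le_div_iff₀ hp0]; nlinarith
    have hb : (1 - p) ^ f ≤ 1 := pow_le_one₀ h1p (by linarith)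
    have h1 : (1 - p) ^ f * (f:ℝ)^2 ≤ (2/p)^2 := by
      calc (1 - p) ^ f * (f:ℝ)^2 ≤ 1 * (f:ℝ)^2 := by gcongr
        _ = (f:ℝ)^2 := one_mul _
        _ ≤ (2/p)^2 := by gcongr
    have h2 : (1 - p) ^ f * (f:ℝ) / p ≤ (2/p) / p := by
      gcongr
      calc (1 - p) ^ f * (f:ℝ) ≤ 1 * (f:ℝ) := by gcongr
        _ = (f:ℝ) := one_mul _
        _ ≤ 2/p := hfle
    have h3 : (2/p)^2 + (2/p)/p ≤ 6 / p^2 := by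
      have e1 : (2/p)^2 = 4 / p^2 := by rw [div_pow]; norm_num
      have e2 : (2/p)/p = 2 / p^2 := by rw [div_div, sq]
      rw [e1, e2, ← add_div]
      gcongr
      norm_num
    linarith
  · -- large case
    have hpow : (1 - p) ^ f ≤ Real.exp (-c) := by
      have hx : 1 - p ≤ Real.exp (-p) := by linarith [Real.add_one_le_exp (-p)]
      calc (1 - p) ^ f ≤ (Real.exp (-p)) ^ f := by gcongr
        _ = Real.exp (-p * f) := by rw [← Real.exp_nat_mul]; ring_nf
        _ = Real.exp (-c) := by rw [hc]; ring_nf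
    set E : ℝ := Real.exp c with hE
    have hEpos : 0 < E := Real.exp_pos c
    have hcE : c ≤ E := by
      have := Real.add_one_le_exp c
      linarith
    have hc2E : c^2 ≤ E := by
      have h1 : c/4 + 1 ≤ Real.exp (c/4) := by linarith [Real.add_one_le_exp (c/4)]
      have ha : c ≤ (c/4 + 1)^2 := by nlinarith [sq_nonneg (c - 4)]
      have hEq : E = (Real.exp (c/4))^4 := by
        rw [hE, ← Real.exp_nat_mul]
        norm_num
        ring
      calc c^2 ≤ ((c/4+1)^2)^2 := by gcongr
        _ ≤ ((Real.exp (c/4))^2)^2 := by gcongr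
        _ = E := by rw [hEq]; ring
    have hexpneg : Real.exp (-c) = E⁻¹ := by rw [Real.exp_neg, hE]
    have hfc : (f:ℝ) = c / p := by rw [hc]; field_simp
    have t1 : (1 - p) ^ f * (f:ℝ)^2 ≤ 1 / p^2 := by
      calc (1 - p) ^ f * (f:ℝ)^2 ≤ E⁻¹ * (f:ℝ)^2 := by
            gcongr; rw [← hexpneg]; exact hpow
        _ = E⁻¹ * (c^2 / p^2) := by rw [hfc]; ring
        _ ≤ E⁻¹ * (E / p^2) := by gcongr
        _ = 1 / p^2 := by field_simp
    have t2 : (1 - p) ^ f * (f:ℝ) / p ≤ 1 / p^2 := by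
      calc (1 - p) ^ f * (f:ℝ) / p ≤ E⁻¹ * (f:ℝ) / p := by
            gcongr; rw [← hexpneg]; exact hpow
        _ = E⁻¹ * c / p^2 := by rw [hfc]; ring
        _ ≤ E⁻¹ * E / p^2 := by gcongr
        _ = 1 / p^2 := by field_simp
    have h6 : (1:ℝ)/p^2 + 1/p^2 ≤ 6/p^2 := by
      rw [← add_div]
      gcongr
      norm_num
    linarith
end

section
/- Let 0 < p ≤ 1 and let f ≥ 1 be a natural number. Let B_1, …, B_f and D_1, …, D_f be 2f mutually independent Bernoulli(p) random variables. Define X_1 = min{t : B_t = 1} if some B_t = 1 and X_1 = f + 1/p otherwise; define X_2 = min{t : B_{f+1−t} = 1} if some B_t = 1 and X_2 = f + 1/p otherwise; define d = ∑_{t=1}^{f} D_t. Define f̂' = f − X_1 − X_2 + 2/p if some B_t = 1, and f̂' = −d/p otherwise. Then E[f̂'] = f and Var[f̂'] ≤ 16/p^2. -/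
open MeasureTheory ProbabilityTheory

open scoped Classical

/-- The frequency-tracking estimator `f̂'` of equation (3) of the paper: if some
counter-sample `B_t` succeeds, it equals `f − X₁ − X₂ + 2/p`, where `X₁, X₂` are the
forward and backward first-success positions; otherwise it equals `−d/p`, where
`d = ∑_t D_t` is the backup sample count. -/
noncomputable def fhatPrime {Ω : Type*} (f : ℕ) (p : ℝ) (B D : Fin f → Ω → Bool)
    (ω : Ω) : ℝ :=
  if ∃ t, B t ω = true then
    (f : ℝ) - firstSuccess f p B ω - firstSuccess f p (fun t => B t.rev) ω + 2 / p
  else -(∑ t, if D t ω = true then (1 : ℝ) else 0) / p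



private lemma ite_one_mul' {P Q : Prop} [Decidable P] [Decidable Q] :
    (if P then (1:ℝ) else 0) * (if Q then 1 else 0) = if P ∧ Q then 1 else 0 := by
  by_cases hP : P <;> by_cases hQ : Q <;> simp [hP, hQ]

private lemma geom1 (p : ℝ) (f : ℕ) :
    p * ∑ k ∈ Finset.range f, (1-p)^(k+1) = (1-p) * (1 - (1-p)^f) := by
  induction f with
  | zero => simp
  | succ n ih =>
    rw [Finset.sum_range_succ, mul_add]
    rw [pow_succ (1-p) n]
    linear_combination ih

private lemma geom2 (p : ℝ) (f : ℕ) :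
    p^2 * ∑ j ∈ Finset.range f, ∑ k ∈ Finset.range f, (1-p)^(max j k + 1)
      = (1-p) * (2 * (1 - (1-p)^f - f*p*(1-p)^f) - p * (1 - (1-p)^f)) := by
  induction f with
  | zero => simp
  | succ n ih =>
    have hstep : ∑ j ∈ Finset.range (n+1), ∑ k ∈ Finset.range (n+1), (1-p)^(max j k + 1)
        = (∑ j ∈ Finset.range n, ∑ k ∈ Finset.range n, (1-p)^(max j k + 1))
          + (2*n+1) * (1-p)^(n+1) := by
      rw [Finset.sum_range_succ]
      have hinner : ∀ j ∈ Finset.range n,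
          ∑ k ∈ Finset.range (n+1), (1-p)^(max j k + 1)
            = (∑ k ∈ Finset.range n, (1-p)^(max j k + 1)) + (1-p)^(n+1) := by
        intro j hj
        rw [Finset.sum_range_succ]
        congr 2
        rw [max_eq_right (le_of_lt (Finset.mem_range.mp hj))]
      have hlastrow : ∑ k ∈ Finset.range (n+1), (1-p)^(max n k + 1)
          = (n+1 : ℝ) * (1-p)^(n+1) := by
        rw [Finset.sum_congr rfl (fun k hk => by
          rw [max_eq_left (Nat.lt_succ_iff.mp (Finset.mem_range.mp hk))]),
          Finset.sum_const, Finset.card_range, nsmul_eq_mul]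
        push_cast
        ring
      rw [Finset.sum_congr rfl hinner, Finset.sum_add_distrib, Finset.sum_const,
        Finset.card_range, hlastrow, nsmul_eq_mul]
      push_cast
      ring
    rw [hstep, mul_add]
    rw [pow_succ (1-p) n]
    push_cast
    linear_combination ih

private lemma bern_bound {p : ℝ} (hp0 : 0 < p) (hp1 : p ≤ 1) (f : ℕ) :
    (f:ℝ) * (1-p)^f ≤ (1-p)/p := by
  rcases eq_or_lt_of_le hp1 with h1 | h1
  · subst h1
    simp only [sub_self]
    cases f with
    | zero => simp
    | succ n => simp [zero_pow]
  · have hq : 0 < 1 - p := by linarith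
    have hb : 1 + (f:ℝ) * (p / (1-p)) ≤ (1 + p/(1-p))^f :=
      one_add_mul_le_pow (le_trans (by norm_num) (by positivity : (0:ℝ) ≤ p/(1-p))) f
    have h1q : (1 : ℝ) + p/(1-p) = 1/(1-p) := by field_simp; ring
    rw [h1q] at hb
    have h2 : (f:ℝ) * p / (1-p) ≤ (1/(1-p))^f := by
      refine le_trans ?_ hb
      rw [mul_div_assoc]
      linarith
    have h3 : (1/(1-p))^f * (1-p)^f = 1 := by
      rw [← mul_pow]
      field_simp
      simp
    rw [le_div_iff₀ hp0]
    have h4 := mul_le_mul_of_nonneg_right h2 (pow_nonneg hq.le f)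
    rw [h3] at h4
    have h5 := mul_le_mul_of_nonneg_right h4 hq.le
    rw [one_mul] at h5
    calc (f:ℝ) * (1-p)^f * p = ((f:ℝ) * p / (1-p) * (1-p)^f) * (1-p) := by
          field_simp
      _ ≤ 1 - p := h5

section Aux

variable {Ω : Type*} [MeasureSpace Ω] [IsProbabilityMeasure (ℙ : Measure Ω)]
variable {p : ℝ} {f : ℕ} {B D : Fin f → Ω → Bool}

private lemma measElim (hmeasB : ∀ t, Measurable (B t)) (hmeasD : ∀ t, Measurable (D t)) :
    ∀ i, Measurable (Sum.elim B D i) := by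
  intro i; cases i with
  | inl t => exact hmeasB t
  | inr t => exact hmeasD t

private lemma patSet_eq (s : Finset (Fin f ⊕ Fin f)) (b : Fin f ⊕ Fin f → Bool) :
    {ω : Ω | ∀ i ∈ s, Sum.elim B D i ω = b i} = ⋂ i ∈ s, (Sum.elim B D i) ⁻¹' {b i} := by
  ext ω; simp [Set.mem_iInter]

private lemma patMeas (hmeasB : ∀ t, Measurable (B t)) (hmeasD : ∀ t, Measurable (D t))
    (s : Finset (Fin f ⊕ Fin f)) (b : Fin f ⊕ Fin f → Bool) :
    MeasurableSet {ω : Ω | ∀ i ∈ s, Sum.elim B D i ω = b i} := by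
  rw [patSet_eq]
  exact MeasurableSet.biInter s.countable_toSet fun i _ =>
    (measElim hmeasB hmeasD i) (measurableSet_singleton _)

private lemma patProb (hp0 : 0 ≤ p)
    (hmeasB : ∀ t, Measurable (B t)) (hmeasD : ∀ t, Measurable (D t))
    (hindep : iIndepFun (Sum.elim B D) ℙ)
    (hberB : ∀ t, ℙ {ω | B t ω = true} = ENNReal.ofReal p)
    (hberD : ∀ t, ℙ {ω | D t ω = true} = ENNReal.ofReal p)
    (s : Finset (Fin f ⊕ Fin f)) (b : Fin f ⊕ Fin f → Bool) :
    ℙ {ω : Ω | ∀ i ∈ s, Sum.elim B D i ω = b i}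
      = ∏ i ∈ s, ENNReal.ofReal (if b i then p else 1 - p) := by
  have hone : ∀ i : Fin f ⊕ Fin f, ℙ {ω : Ω | Sum.elim B D i ω = true} = ENNReal.ofReal p := by
    intro i; cases i with
    | inl t => exact hberB t
    | inr t => exact hberD t
  have hsingle : ∀ i, ℙ ((Sum.elim B D i) ⁻¹' {b i})
      = ENNReal.ofReal (if b i then p else 1 - p) := by
    intro i
    cases hbi : b i with
    | true =>
      simp only [if_true]
      rw [show (Sum.elim B D i) ⁻¹' {true} = {ω : Ω | Sum.elim B D i ω = true} from rfl]
      exact hone i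
    | false =>
      have hc : (Sum.elim B D i) ⁻¹' {false} = ((Sum.elim B D i) ⁻¹' {true})ᶜ := by
        ext ω; simp
      rw [if_neg (by simp), hc,
        measure_compl ((measElim hmeasB hmeasD i) (measurableSet_singleton _)) (measure_ne_top _ _),
        measure_univ,
        show (Sum.elim B D i ⁻¹' {true}) = {ω : Ω | Sum.elim B D i ω = true} from rfl,
        hone i, ← ENNReal.ofReal_one, ← ENNReal.ofReal_sub _ hp0]
  rw [patSet_eq,
    hindep.measure_inter_preimage_eq_mul s (sets := fun i => {b i})
      (fun i _ => measurableSet_singleton _)]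
  exact Finset.prod_congr rfl fun i _ => hsingle i

private lemma patInt (hp0 : 0 ≤ p) (hp1 : p ≤ 1)
    (hmeasB : ∀ t, Measurable (B t)) (hmeasD : ∀ t, Measurable (D t))
    (hindep : iIndepFun (Sum.elim B D) ℙ)
    (hberB : ∀ t, ℙ {ω | B t ω = true} = ENNReal.ofReal p)
    (hberD : ∀ t, ℙ {ω | D t ω = true} = ENNReal.ofReal p)
    (s : Finset (Fin f ⊕ Fin f)) (b : Fin f ⊕ Fin f → Bool) :
    ∫ ω, (if ∀ i ∈ s, Sum.elim B D i ω = b i then (1:ℝ) else 0) ∂ℙ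
      = ∏ i ∈ s, (if b i then p else 1 - p) := by
  have hms := patMeas hmeasB hmeasD s b
  have h1 : (fun ω : Ω => if ∀ i ∈ s, Sum.elim B D i ω = b i then (1:ℝ) else 0)
      = Set.indicator {ω : Ω | ∀ i ∈ s, Sum.elim B D i ω = b i} (fun _ => (1:ℝ)) := by
    funext ω; rw [Set.indicator_apply]; rfl
  rw [h1, integral_indicator_const (1:ℝ) hms, smul_eq_mul, mul_one, measureReal_def,
    patProb hp0 hmeasB hmeasD hindep hberB hberD s b, ENNReal.toReal_prod]
  exact Finset.prod_congr rfl fun i _ => ENNReal.toReal_ofReal (by split <;> linarith)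

end Aux

section Aux2
variable {Ω : Type*} [MeasureSpace Ω] [IsProbabilityMeasure (ℙ : Measure Ω)]
variable {p : ℝ} {f : ℕ} {B D : Fin f → Ω → Bool}

private lemma cond_int (hp0 : 0 ≤ p) (hp1 : p ≤ 1)
    (hmeasB : ∀ t, Measurable (B t)) (hmeasD : ∀ t, Measurable (D t))
    (hindep : iIndepFun (Sum.elim B D) ℙ)
    (hberB : ∀ t, ℙ {ω | B t ω = true} = ENNReal.ofReal p)
    (hberD : ∀ t, ℙ {ω | D t ω = true} = ENNReal.ofReal p)
    (P : Ω → Prop) (inst : ∀ ω : Ω, Decidable (P ω))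
    (s : Finset (Fin f ⊕ Fin f)) (b : Fin f ⊕ Fin f → Bool)
    (hcond : ∀ ω, (∀ i ∈ s, Sum.elim B D i ω = b i) ↔ P ω) :
    MeasurableSet {ω : Ω | P ω} ∧
      ∫ ω, (@ite ℝ (P ω) (inst ω) 1 0) ∂ℙ = ∏ i ∈ s, (if b i then p else 1 - p) := by
  have hset : {ω : Ω | P ω} = {ω : Ω | ∀ i ∈ s, Sum.elim B D i ω = b i} := by
    ext ω; exact (hcond ω).symm
  constructor
  · rw [hset]; exact patMeas hmeasB hmeasD s b
  · have h1 : (fun ω : Ω => @ite ℝ (P ω) (inst ω) 1 0)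
        = fun ω => if ∀ i ∈ s, Sum.elim B D i ω = b i then (1:ℝ) else 0 := by
      funext ω; exact if_congr (hcond ω).symm rfl rfl
    rw [h1]; exact patInt hp0 hp1 hmeasB hmeasD hindep hberB hberD s b

variable (hp0 : 0 < p) (hp1 : p ≤ 1)
    (hmeasB : ∀ t, Measurable (B t)) (hmeasD : ∀ t, Measurable (D t))
    (hindep : iIndepFun (Sum.elim B D) ℙ)
    (hberB : ∀ t, ℙ {ω | B t ω = true} = ENNReal.ofReal p)
    (hberD : ∀ t, ℙ {ω | D t ω = true} = ENNReal.ofReal p)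

include hp0 hp1 hmeasB hmeasD hindep hberB hberD

-- the event that B is false on positions ≤ j or ≤ k (two thresholds; use j = k for single)
private lemma ev_zz (j k : Fin f) :
    MeasurableSet {ω : Ω | ∀ t, (t ≤ j ∨ t ≤ k) → B t ω = false} ∧
      ∫ ω, (if ∀ t, (t ≤ j ∨ t ≤ k) → B t ω = false then (1:ℝ) else 0) ∂ℙ
        = (1-p) ^ (max (j:ℕ) (k:ℕ) + 1) := by
  have h := cond_int hp0.le hp1 hmeasB hmeasD hindep hberB hberD
    (fun ω => ∀ t, (t ≤ j ∨ t ≤ k) → B t ω = false) (fun _ => inferInstance)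
    ((Finset.Iic (j ⊔ k)).map ⟨Sum.inl, Sum.inl_injective⟩) (fun _ => false) ?_
  · refine ⟨h.1, ?_⟩
    refine h.2.trans ?_
    rw [Finset.prod_congr rfl (fun i _ => if_neg (by simp)), Finset.prod_const,
      Finset.card_map, Fin.card_Iic]
    congr 1
  · intro ω
    constructor
    · intro h t ht
      refine h (Sum.inl t) ?_
      simp only [Finset.mem_map, Finset.mem_Iic, Function.Embedding.coeFn_mk]
      exact ⟨t, le_max_iff.mpr ht, rfl⟩
    · rintro h i hi
      simp only [Finset.mem_map, Finset.mem_Iic, Function.Embedding.coeFn_mk] at hi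
      obtain ⟨t, ht, rfl⟩ := hi
      exact h t (le_max_iff.mp ht)

private lemma ev_zz' (j k : Fin f) :
    MeasurableSet {ω : Ω | ∀ t, (t ≤ j ∨ t ≤ k) → B t.rev ω = false} ∧
      ∫ ω, (if ∀ t, (t ≤ j ∨ t ≤ k) → B t.rev ω = false then (1:ℝ) else 0) ∂ℙ
        = (1-p) ^ (max (j:ℕ) (k:ℕ) + 1) := by
  have h := cond_int hp0.le hp1 hmeasB hmeasD hindep hberB hberD
    (fun ω => ∀ t, (t ≤ j ∨ t ≤ k) → B t.rev ω = false) (fun _ => inferInstance)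
    ((Finset.Iic (j ⊔ k)).map ⟨fun t => Sum.inl t.rev,
        fun a b hab => Fin.rev_injective (Sum.inl_injective hab)⟩) (fun _ => false) ?_
  · refine ⟨h.1, ?_⟩
    refine h.2.trans ?_
    rw [Finset.prod_congr rfl (fun i _ => if_neg (by simp)), Finset.prod_const,
      Finset.card_map, Fin.card_Iic]
    congr 1
  · intro ω
    constructor
    · intro h t ht
      refine h (Sum.inl t.rev) ?_
      simp only [Finset.mem_map, Finset.mem_Iic, Function.Embedding.coeFn_mk]
      exact ⟨t, le_max_iff.mpr ht, rfl⟩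
    · rintro h i hi
      simp only [Finset.mem_map, Finset.mem_Iic, Function.Embedding.coeFn_mk] at hi
      obtain ⟨t, ht, rfl⟩ := hi
      exact h t (le_max_iff.mp ht)

private lemma ev_n :
    MeasurableSet {ω : Ω | ∀ t, B t ω = false} ∧
      ∫ ω, (if ∀ t, B t ω = false then (1:ℝ) else 0) ∂ℙ = (1-p) ^ f := by
  have h := cond_int hp0.le hp1 hmeasB hmeasD hindep hberB hberD
    (fun ω => ∀ t, B t ω = false) (fun _ => inferInstance)
    (Finset.univ.map ⟨Sum.inl, Sum.inl_injective⟩) (fun _ => false) ?_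
  · refine ⟨h.1, ?_⟩
    refine h.2.trans ?_
    rw [Finset.prod_congr rfl (fun i _ => if_neg (by simp)), Finset.prod_const,
      Finset.card_map, Finset.card_univ, Fintype.card_fin]
  · intro ω
    constructor
    · intro h t
      exact h (Sum.inl t) (by simp)
    · rintro h i hi
      simp only [Finset.mem_map, Finset.mem_univ, Function.Embedding.coeFn_mk] at hi
      obtain ⟨t, -, rfl⟩ := hi
      exact h t

private lemma ev_ddn (u v : Fin f) :
    MeasurableSet {ω : Ω | D u ω = true ∧ D v ω = true ∧ ∀ t, B t ω = false} ∧
      ∫ ω, (if D u ω = true ∧ D v ω = true ∧ ∀ t, B t ω = false then (1:ℝ) else 0) ∂ℙ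
        = (if u = v then p else p^2) * (1-p) ^ f := by
  have h := cond_int hp0.le hp1 hmeasB hmeasD hindep hberB hberD
    (fun ω => D u ω = true ∧ D v ω = true ∧ ∀ t, B t ω = false) (fun _ => inferInstance)
    (insert (Sum.inr u) (insert (Sum.inr v) (Finset.univ.map ⟨Sum.inl, Sum.inl_injective⟩)))
    (Sum.elim (fun _ => false) (fun _ => true)) ?_
  · refine ⟨h.1, ?_⟩
    refine h.2.trans ?_
    have hprod : ∏ i ∈ Finset.univ.map (⟨Sum.inl, Sum.inl_injective⟩ : Fin f ↪ Fin f ⊕ Fin f),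
        (if Sum.elim (fun _ : Fin f => false) (fun _ : Fin f => true) i = true then p else 1 - p)
        = (1-p)^f := by
      rw [Finset.prod_map]
      simp
    by_cases huv : u = v
    · subst huv
      rw [Finset.insert_idem, Finset.prod_insert (by simp), hprod, if_pos rfl]
      simp
    · rw [Finset.prod_insert (by simp [huv]), Finset.prod_insert (by simp), hprod, if_neg huv]
      simp only [Sum.elim_inr, if_true]
      ring
  · intro ω
    constructor
    · intro h
      refine ⟨h (Sum.inr u) (by simp), h (Sum.inr v) (by simp), fun t => ?_⟩
      exact h (Sum.inl t) (by simp)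
    · rintro ⟨h1, h2, h3⟩ i hi
      simp only [Finset.mem_insert, Finset.mem_map, Finset.mem_univ,
        Function.Embedding.coeFn_mk] at hi
      rcases hi with rfl | rfl | ⟨t, -, rfl⟩
      · exact h1
      · exact h2
      · exact h3 t

private lemma ev_dn (u : Fin f) :
    MeasurableSet {ω : Ω | D u ω = true ∧ ∀ t, B t ω = false} ∧
      ∫ ω, (if D u ω = true ∧ ∀ t, B t ω = false then (1:ℝ) else 0) ∂ℙ
        = p * (1-p) ^ f := by
  have h := ev_ddn hp0 hp1 hmeasB hmeasD hindep hberB hberD u u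
  have hP : ∀ ω : Ω, (D u ω = true ∧ D u ω = true ∧ ∀ t, B t ω = false)
      ↔ (D u ω = true ∧ ∀ t, B t ω = false) := by
    intro ω; tauto
  constructor
  · have := h.1
    convert this using 1
    ext ω; exact (hP ω).symm
  · have h2 := h.2
    rw [if_pos rfl] at h2
    refine Eq.trans ?_ h2
    congr 1; funext ω; exact if_congr (hP ω).symm rfl rfl

end Aux2

section PW
variable {Ω : Type*} {p : ℝ} {f : ℕ}

private lemma firstSuccess_eq (p : ℝ) (C : Fin f → Ω → Bool) (ω : Ω) :
    firstSuccess f p C ω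
      = 1 + (∑ k : Fin f, if ∀ t, t ≤ k → C t ω = false then (1:ℝ) else 0)
        + (1/p - 1) * (if ∀ t, C t ω = false then 1 else 0) := by
  unfold firstSuccess
  by_cases h : (Finset.univ.filter fun t => C t ω = true).Nonempty
  · rw [dif_pos h]
    set m := (Finset.univ.filter fun t => C t ω = true).min' h with hm
    have hmem : C m ω = true :=
      (Finset.mem_filter.mp ((Finset.univ.filter fun t => C t ω = true).min'_mem h)).2
    have hlast : ¬ (∀ t, C t ω = false) := fun hall => by simp [hall m] at hmem
    rw [if_neg hlast, mul_zero, add_zero]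
    have hk : ∀ k : Fin f, (∀ t, t ≤ k → C t ω = false) ↔ k < m := by
      intro k
      constructor
      · intro hall
        by_contra hlt
        push_neg at hlt
        have := hall m hlt
        rw [this] at hmem
        exact Bool.false_ne_true hmem
      · intro hlt t htk
        by_contra htrue
        have ht : C t ω = true := by
          cases hct : C t ω
          · exact absurd hct htrue
          · rfl
        have hmt : m ≤ t := Finset.min'_le _ t (by simp [ht])
        exact absurd hlt (not_lt.mpr (hmt.trans htk))
    have hsum : (∑ k : Fin f, if ∀ t, t ≤ k → C t ω = false then (1:ℝ) else 0)
        = ∑ k : Fin f, if k < m then (1:ℝ) else 0 :=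
      Finset.sum_congr rfl fun k _ => if_congr (hk k) rfl rfl
    rw [hsum, Finset.sum_boole]
    have hfil : Finset.univ.filter (fun k : Fin f => k < m) = Finset.Iio m := by
      ext x; simp
    rw [hfil, Fin.card_Iio]
    push_cast
    ring
  · rw [dif_neg h]
    have hall : ∀ t, C t ω = false := by
      intro t
      cases hct : C t ω
      · rfl
      · exact absurd ⟨t, by simp [hct]⟩ h
    have h1 : ∀ k : Fin f, (if ∀ t, t ≤ k → C t ω = false then (1:ℝ) else 0) = 1 :=
      fun k => if_pos (fun t _ => hall t)
    rw [Finset.sum_congr rfl (fun k _ => h1 k), if_pos hall, Finset.sum_const,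
      Finset.card_univ, Fintype.card_fin]
    simp only [nsmul_eq_mul, mul_one]
    ring

private lemma fhat_eq (p : ℝ) (B D : Fin f → Ω → Bool) (ω : Ω) :
    fhatPrime f p B D ω
      = f + (1/p - firstSuccess f p B ω)
          + (1/p - firstSuccess f p (fun t => B t.rev) ω)
          + ((f : ℝ) - (∑ t, if D t ω = true then (1:ℝ) else 0)/p)
            * (if ∀ t, B t ω = false then 1 else 0) := by
  unfold fhatPrime
  by_cases hE : ∃ t, B t ω = true
  · rw [if_pos hE]
    have hlast : ¬ (∀ t, B t ω = false) := by
      obtain ⟨t, ht⟩ := hE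
      intro hall
      rw [hall t] at ht
      exact Bool.false_ne_true ht
    rw [if_neg hlast, mul_zero, add_zero]
    ring
  · rw [if_neg hE]
    have hall : ∀ t, B t ω = false := by
      intro t
      cases hct : B t ω
      · rfl
      · exact absurd ⟨t, hct⟩ hE
    have hall' : ∀ t : Fin f, B t.rev ω = false := fun t => hall t.rev
    have hfs1 : firstSuccess f p B ω = f + 1/p := by
      unfold firstSuccess
      rw [dif_neg]
      simp [Finset.filter_eq_empty_iff, hall]
    have hfs2 : firstSuccess f p (fun t => B t.rev) ω = f + 1/p := by
      unfold firstSuccess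
      rw [dif_neg]
      simp [Finset.filter_eq_empty_iff, hall']
    rw [hfs1, hfs2, if_pos hall]
    ring
end PW

section DirMoments
variable {Ω : Type*} [MeasureSpace Ω] [IsProbabilityMeasure (ℙ : Measure Ω)]

private lemma integrable_ite {P : Ω → Prop} {inst : ∀ ω, Decidable (P ω)}
    (hms : MeasurableSet {ω | P ω}) :
    Integrable (fun ω => @ite ℝ (P ω) (inst ω) 1 0) ℙ := by
  have h : (fun ω => @ite ℝ (P ω) (inst ω) 1 0)
      = Set.indicator {ω | P ω} (fun _ => (1:ℝ)) := by
    funext ω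
    by_cases h : P ω <;> simp [Set.indicator_apply, h]
  rw [h]
  exact (integrable_const (1:ℝ)).indicator hms

private lemma integral_ite {P : Ω → Prop} {inst : ∀ ω, Decidable (P ω)}
    (hms : MeasurableSet {ω | P ω}) :
    ∫ ω, (@ite ℝ (P ω) (inst ω) 1 0) ∂ℙ = (ℙ {ω | P ω}).toReal := by
  have h : (fun ω => @ite ℝ (P ω) (inst ω) 1 0)
      = Set.indicator {ω | P ω} (fun _ => (1:ℝ)) := by
    funext ω
    by_cases h : P ω <;> simp [Set.indicator_apply, h]
  rw [h, integral_indicator_const (1:ℝ) hms, smul_eq_mul, mul_one, measureReal_def]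

private lemma dir_moments {p : ℝ} (hp0 : 0 < p) (hp1 : p ≤ 1) {f : ℕ}
    (C : Fin f → Ω → Bool)
    (hmsZ : ∀ j k : Fin f, MeasurableSet {ω : Ω | ∀ t, (t ≤ j ∨ t ≤ k) → C t ω = false})
    (hintZZ : ∀ j k : Fin f,
      ∫ ω, (if ∀ t, (t ≤ j ∨ t ≤ k) → C t ω = false then (1:ℝ) else 0) ∂ℙ
        = (1-p) ^ (max (j:ℕ) (k:ℕ) + 1))
    (hmsN : MeasurableSet {ω : Ω | ∀ t, C t ω = false})
    (hintN : ∫ ω, (if ∀ t, C t ω = false then (1:ℝ) else 0) ∂ℙ = (1-p) ^ f) :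
    Integrable (fun ω => 1/p - firstSuccess f p C ω) ℙ ∧
    (∫ ω, (1/p - firstSuccess f p C ω) ∂ℙ) = 0 ∧
    Integrable (fun ω => (1/p - firstSuccess f p C ω)^2) ℙ ∧
    (∫ ω, (1/p - firstSuccess f p C ω)^2 ∂ℙ) = (1-p) * (1 - (1-p)^f) / p^2 := by
  have hbr : ∀ (k : Fin f) (ω : Ω),
      (if ∀ t, t ≤ k → C t ω = false then (1:ℝ) else 0)
        = (if ∀ t, (t ≤ k ∨ t ≤ k) → C t ω = false then 1 else 0) :=
    fun k ω => if_congr ⟨fun h t ht => h t (ht.elim id id),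
      fun h t ht => h t (Or.inl ht)⟩ rfl rfl
  have hmsZ1 : ∀ k : Fin f, MeasurableSet {ω : Ω | ∀ t, t ≤ k → C t ω = false} := by
    intro k
    have : {ω : Ω | ∀ t, t ≤ k → C t ω = false}
        = {ω : Ω | ∀ t, (t ≤ k ∨ t ≤ k) → C t ω = false} := by
      ext ω
      constructor
      · exact fun h t ht => h t (ht.elim id id)
      · exact fun h t ht => h t (Or.inl ht)
    rw [this]; exact hmsZ k k
  have hIz : ∀ k : Fin f,
      Integrable (fun ω => if ∀ t, t ≤ k → C t ω = false then (1:ℝ) else 0) ℙ :=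
    fun k => integrable_ite (hmsZ1 k)
  have hIzz : ∀ j k : Fin f,
      Integrable (fun ω => if ∀ t, (t ≤ j ∨ t ≤ k) → C t ω = false then (1:ℝ) else 0) ℙ :=
    fun j k => integrable_ite (hmsZ j k)
  have hIn : Integrable (fun ω => if ∀ t, C t ω = false then (1:ℝ) else 0) ℙ :=
    integrable_ite hmsN
  have hEz : ∀ k : Fin f,
      ∫ ω, (if ∀ t, t ≤ k → C t ω = false then (1:ℝ) else 0) ∂ℙ = (1-p)^((k:ℕ)+1) := by
    intro k
    have h1 : (fun ω => if ∀ t, t ≤ k → C t ω = false then (1:ℝ) else 0)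
        = fun ω => if ∀ t, (t ≤ k ∨ t ≤ k) → C t ω = false then (1:ℝ) else 0 :=
      funext fun ω => hbr k ω
    rw [h1, hintZZ k k, max_self]
  -- representation of Y
  have hYrep : firstSuccess f p C
      = fun ω => 1 + (∑ k : Fin f, if ∀ t, t ≤ k → C t ω = false then (1:ℝ) else 0)
          + (1/p - 1) * (if ∀ t, C t ω = false then 1 else 0) :=
    funext fun ω => firstSuccess_eq p C ω
  have hIsum : Integrable
      (fun ω => ∑ k : Fin f, if ∀ t, t ≤ k → C t ω = false then (1:ℝ) else 0) ℙ :=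
    integrable_finset_sum _ (fun k _ => hIz k)
  have hIY : Integrable (firstSuccess f p C) ℙ := by
    rw [hYrep]
    exact ((integrable_const 1).add hIsum).add (hIn.const_mul _)
  -- geometric sums
  have hSval : (∑ k : Fin f, (1-p)^((k:ℕ)+1)) = (1-p) * (1 - (1-p)^f) / p := by
    have h1 : (∑ k : Fin f, (1-p)^((k:ℕ)+1)) = ∑ k ∈ Finset.range f, (1-p)^(k+1) :=
      Fin.sum_univ_eq_sum_range (fun k => (1-p)^(k+1)) f
    rw [h1, eq_div_iff hp0.ne', mul_comm]
    exact geom1 p f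
  have hI0 : Integrable (fun ω => 1
      + (∑ k : Fin f, if ∀ t, t ≤ k → C t ω = false then (1:ℝ) else 0)) ℙ :=
    (integrable_const 1).add hIsum
  have hIcn : Integrable
      (fun ω => (1/p - 1) * (if ∀ t, C t ω = false then (1:ℝ) else 0)) ℙ :=
    hIn.const_mul _
  have hEY : ∫ ω, firstSuccess f p C ω ∂ℙ = 1/p := by
    have h0 : ∫ ω, firstSuccess f p C ω ∂ℙ
        = ∫ ω, (1 + (∑ k : Fin f, if ∀ t, t ≤ k → C t ω = false then (1:ℝ) else 0)
            + (1/p - 1) * (if ∀ t, C t ω = false then 1 else 0)) ∂ℙ :=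
      integral_congr_ae (Filter.Eventually.of_forall (fun ω => firstSuccess_eq p C ω))
    rw [h0, integral_add hI0 hIcn, integral_add (integrable_const 1) hIsum,
      integral_const, integral_finset_sum _ (fun k _ => hIz k), integral_const_mul _ _, hintN]
    simp only [measure_univ, probReal_univ, ENNReal.toReal_one, smul_eq_mul, mul_one]
    rw [Finset.sum_congr rfl (fun k _ => hEz k), hSval]
    field_simp
    ring
  have hIu : Integrable (fun ω => 1/p - firstSuccess f p C ω) ℙ :=
    (integrable_const (1/p)).sub hIY
  have hEu : (∫ ω, (1/p - firstSuccess f p C ω) ∂ℙ) = 0 := by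
    rw [integral_sub (integrable_const (1/p)) hIY, integral_const, hEY]
    simp
  -- squared representation
  have hu2 : ∀ ω, (1/p - firstSuccess f p C ω)^2
      = (1/p-1)^2 - (1/p-1)^2 * (if ∀ t, C t ω = false then (1:ℝ) else 0)
        - 2*(1/p-1)*(∑ k : Fin f, if ∀ t, t ≤ k → C t ω = false then (1:ℝ) else 0)
        + 2*(1/p-1)*f*(if ∀ t, C t ω = false then (1:ℝ) else 0)
        + ∑ j : Fin f, ∑ k : Fin f,
            (if ∀ t, (t ≤ j ∨ t ≤ k) → C t ω = false then (1:ℝ) else 0) := by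
    intro ω
    rw [firstSuccess_eq p C ω]
    set n : ℝ := (if ∀ t, C t ω = false then (1:ℝ) else 0) with hn
    set S : ℝ := (∑ k : Fin f, if ∀ t, t ≤ k → C t ω = false then (1:ℝ) else 0) with hS
    have hnn : n * n = n := by
      rw [hn]; by_cases h : ∀ t, C t ω = false <;> simp [h]
    have hnz : ∀ k : Fin f, n * (if ∀ t, t ≤ k → C t ω = false then (1:ℝ) else 0) = n := by
      intro k
      by_cases h : ∀ t, C t ω = false
      · rw [if_pos (fun t _ => h t), mul_one]
      · rw [hn, if_neg h, zero_mul]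
    have hnS : n * S = f * n := by
      rw [hS, Finset.mul_sum, Finset.sum_congr rfl (fun k _ => hnz k), Finset.sum_const,
        Finset.card_univ, Fintype.card_fin, nsmul_eq_mul]
    have hSS : S * S = ∑ j : Fin f, ∑ k : Fin f,
        (if ∀ t, (t ≤ j ∨ t ≤ k) → C t ω = false then (1:ℝ) else 0) := by
      rw [hS, Finset.sum_mul_sum]
      refine Finset.sum_congr rfl fun j _ => Finset.sum_congr rfl fun k _ => ?_
      rw [ite_one_mul']
      refine if_congr ?_ rfl rfl
      constructor
      · rintro ⟨h1, h2⟩ t (ht | ht)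
        exacts [h1 t ht, h2 t ht]
      · exact fun h => ⟨fun t ht => h t (Or.inl ht), fun t ht => h t (Or.inr ht)⟩
    calc (1/p - (1 + S + (1/p-1) * n))^2
        = (1/p-1)^2 + (1/p-1)^2*(n*n) + S*S - 2*(1/p-1)^2*n - 2*(1/p-1)*S
          + 2*(1/p-1)*(n*S) := by ring
      _ = _ := by rw [hnn, hnS, hSS]; ring
  have hI2 : Integrable
      (fun ω => (1/p-1)^2 * (if ∀ t, C t ω = false then (1:ℝ) else 0)) ℙ :=
    hIn.const_mul _
  have hI3 : Integrable (fun ω =>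
      2*(1/p-1)*(∑ k : Fin f, if ∀ t, t ≤ k → C t ω = false then (1:ℝ) else 0)) ℙ :=
    hIsum.const_mul _
  have hI4 : Integrable
      (fun ω => 2*(1/p-1)*f*(if ∀ t, C t ω = false then (1:ℝ) else 0)) ℙ :=
    hIn.const_mul _
  have hI5 : Integrable (fun ω => ∑ j : Fin f, ∑ k : Fin f,
      (if ∀ t, (t ≤ j ∨ t ≤ k) → C t ω = false then (1:ℝ) else 0)) ℙ :=
    integrable_finset_sum _ (fun j _ => integrable_finset_sum _ (fun k _ => hIzz j k))
  have hI12 : Integrable (fun ω => (1/p-1)^2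
      - (1/p-1)^2 * (if ∀ t, C t ω = false then (1:ℝ) else 0)) ℙ :=
    (integrable_const _).sub hI2
  have hI123 : Integrable (fun ω => (1/p-1)^2
      - (1/p-1)^2 * (if ∀ t, C t ω = false then (1:ℝ) else 0)
      - 2*(1/p-1)*(∑ k : Fin f, if ∀ t, t ≤ k → C t ω = false then (1:ℝ) else 0)) ℙ :=
    hI12.sub hI3
  have hI1234 : Integrable (fun ω => (1/p-1)^2
      - (1/p-1)^2 * (if ∀ t, C t ω = false then (1:ℝ) else 0)
      - 2*(1/p-1)*(∑ k : Fin f, if ∀ t, t ≤ k → C t ω = false then (1:ℝ) else 0)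
      + 2*(1/p-1)*f*(if ∀ t, C t ω = false then (1:ℝ) else 0)) ℙ :=
    hI123.add hI4
  have hIu2 : Integrable (fun ω => (1/p - firstSuccess f p C ω)^2) ℙ := by
    have h1 : (fun ω => (1/p - firstSuccess f p C ω)^2)
        = fun ω => (1/p-1)^2 - (1/p-1)^2 * (if ∀ t, C t ω = false then (1:ℝ) else 0)
          - 2*(1/p-1)*(∑ k : Fin f, if ∀ t, t ≤ k → C t ω = false then (1:ℝ) else 0)
          + 2*(1/p-1)*f*(if ∀ t, C t ω = false then (1:ℝ) else 0)
          + ∑ j : Fin f, ∑ k : Fin f,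
              (if ∀ t, (t ≤ j ∨ t ≤ k) → C t ω = false then (1:ℝ) else 0) :=
      funext hu2
    rw [h1]
    exact hI1234.add hI5
  have hMval : (∑ j : Fin f, ∑ k : Fin f, (1-p)^(max (j:ℕ) (k:ℕ) + 1))
      = ((1-p) * (2 * (1 - (1-p)^f - f*p*(1-p)^f) - p * (1 - (1-p)^f))) / p^2 := by
    have h1 : (∑ j : Fin f, ∑ k : Fin f, (1-p)^(max (j:ℕ) (k:ℕ) + 1))
        = ∑ j ∈ Finset.range f, ∑ k ∈ Finset.range f, (1-p)^(max j k + 1) := by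
      rw [← Fin.sum_univ_eq_sum_range (fun j => ∑ k ∈ Finset.range f, (1-p)^(max j k + 1)) f]
      exact Finset.sum_congr rfl fun j _ =>
        Fin.sum_univ_eq_sum_range (fun k => (1-p)^(max (j:ℕ) k + 1)) f
    rw [h1, eq_div_iff (by positivity : (p:ℝ)^2 ≠ 0), mul_comm]
    exact geom2 p f
  have hEu2 : (∫ ω, (1/p - firstSuccess f p C ω)^2 ∂ℙ) = (1-p) * (1 - (1-p)^f) / p^2 := by
    have h0 : (∫ ω, (1/p - firstSuccess f p C ω)^2 ∂ℙ)
        = ∫ ω, ((1/p-1)^2 - (1/p-1)^2 * (if ∀ t, C t ω = false then (1:ℝ) else 0)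
          - 2*(1/p-1)*(∑ k : Fin f, if ∀ t, t ≤ k → C t ω = false then (1:ℝ) else 0)
          + 2*(1/p-1)*f*(if ∀ t, C t ω = false then (1:ℝ) else 0)
          + ∑ j : Fin f, ∑ k : Fin f,
              (if ∀ t, (t ≤ j ∨ t ≤ k) → C t ω = false then (1:ℝ) else 0)) ∂ℙ :=
      integral_congr_ae (Filter.Eventually.of_forall hu2)
    rw [h0, integral_add hI1234 hI5, integral_add hI123 hI4, integral_sub hI12 hI3,
      integral_sub (integrable_const _) hI2, integral_const, integral_const_mul _ _,
      integral_const_mul _ _, integral_const_mul _ _, hintN,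
      integral_finset_sum _ (fun k (_ : k ∈ Finset.univ) => hIz k),
      Finset.sum_congr rfl (fun k _ => hEz k), hSval,
      integral_finset_sum _ (fun j (_ : j ∈ Finset.univ) =>
        integrable_finset_sum _ (fun k (_ : k ∈ Finset.univ) => hIzz j k)),
      Finset.sum_congr rfl (fun j (_ : j ∈ Finset.univ) =>
        integral_finset_sum _ (fun k (_ : k ∈ Finset.univ) => hIzz j k)),
      Finset.sum_congr rfl (fun j (_ : j ∈ Finset.univ) =>
        Finset.sum_congr rfl (fun k (_ : k ∈ Finset.univ) => hintZZ j k)), hMval]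
    simp only [measure_univ, probReal_univ, ENNReal.toReal_one, smul_eq_mul, mul_one]
    field_simp
    ring
  exact ⟨hIu, hEu, hIu2, hEu2⟩

end DirMoments

section Bounds
variable {Ω : Type*} [MeasureSpace Ω] [IsProbabilityMeasure (ℙ : Measure Ω)]

private lemma firstSuccess_bounds {f : ℕ} {p : ℝ} (hp0 : 0 < p) (hp1 : p ≤ 1)
    (C : Fin f → Ω → Bool) (ω : Ω) :
    1 ≤ firstSuccess f p C ω ∧ firstSuccess f p C ω ≤ f + 1/p := by
  have h1p : (1:ℝ) ≤ 1/p := by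
    rw [le_div_iff₀ hp0]; linarith
  unfold firstSuccess
  by_cases h : (Finset.univ.filter fun t => C t ω = true).Nonempty
  · rw [dif_pos h]
    constructor
    · have : (0:ℝ) ≤ (((Finset.univ.filter fun t => C t ω = true).min' h : ℕ) : ℝ) := by
        positivity
      linarith
    · have hlt : (((Finset.univ.filter fun t => C t ω = true).min' h : Fin f) : ℕ) < f :=
        Fin.is_lt _
      have : ((((Finset.univ.filter fun t => C t ω = true).min' h : Fin f) : ℕ) : ℝ) + 1
          ≤ (f : ℝ) := by
        have := Nat.succ_le_of_lt hlt
        exact_mod_cast this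
      linarith
  · rw [dif_neg h]
    constructor
    · have : (0:ℝ) ≤ (f:ℝ) := by positivity
      linarith
    · exact le_refl _
end Bounds

set_option maxHeartbeats 2000000 in
/-- Main lemma for the frequency-tracking algorithm: if `B_1,…,B_f,D_1,…,D_f` are
`2f` mutually independent Bernoulli(`p`) variables, the estimator `f̂'` satisfies
`E[f̂'] = f` and `Var[f̂'] ≤ 16/p²`. -/
theorem fhatPrime_unbiased_and_variance {Ω : Type*} [MeasureSpace Ω]
    [IsProbabilityMeasure (ℙ : Measure Ω)]
    (p : ℝ) (hp0 : 0 < p) (hp1 : p ≤ 1) (f : ℕ) (hf : 1 ≤ f)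
    (B D : Fin f → Ω → Bool)
    (hmeasB : ∀ t, Measurable (B t)) (hmeasD : ∀ t, Measurable (D t))
    (hindep : iIndepFun (Sum.elim B D) ℙ)
    (hberB : ∀ t, ℙ {ω | B t ω = true} = ENNReal.ofReal p)
    (hberD : ∀ t, ℙ {ω | D t ω = true} = ENNReal.ofReal p) :
    (∫ ω, fhatPrime f p B D ω ∂ℙ) = f ∧
    variance (fhatPrime f p B D) ℙ ≤ 16 / p ^ 2 := by
  classical
  obtain ⟨msN, intN⟩ := ev_n hp0 hp1 hmeasB hmeasD hindep hberB hberD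
  obtain ⟨hIu1, hEu1, hIu1sq, hEu1sq⟩ := dir_moments hp0 hp1 B
    (fun j k => (ev_zz hp0 hp1 hmeasB hmeasD hindep hberB hberD j k).1)
    (fun j k => (ev_zz hp0 hp1 hmeasB hmeasD hindep hberB hberD j k).2) msN intN
  have hNiff : ∀ ω : Ω, (∀ t : Fin f, B t.rev ω = false) ↔ (∀ t, B t ω = false) := by
    intro ω
    constructor
    · intro h t
      have := h t.rev
      rwa [Fin.rev_rev] at this
    · intro h t
      exact h t.rev
  have hmsN' : MeasurableSet {ω : Ω | ∀ t : Fin f, B t.rev ω = false} := by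
    have he : {ω : Ω | ∀ t : Fin f, B t.rev ω = false} = {ω : Ω | ∀ t, B t ω = false} := by
      ext ω; exact hNiff ω
    rw [he]; exact msN
  have hintN' : ∫ ω, (if ∀ t : Fin f, B t.rev ω = false then (1:ℝ) else 0) ∂ℙ
      = (1-p)^f := by
    have h1 : (fun ω : Ω => if ∀ t : Fin f, B t.rev ω = false then (1:ℝ) else 0)
        = fun ω => if ∀ t, B t ω = false then (1:ℝ) else 0 :=
      funext fun ω => if_congr (hNiff ω) rfl rfl
    rw [h1]; exact intN
  obtain ⟨hIu2, hEu2, hIu2sq, hEu2sq⟩ := dir_moments hp0 hp1 (fun t => B t.rev)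
    (fun j k => (ev_zz' hp0 hp1 hmeasB hmeasD hindep hberB hberD j k).1)
    (fun j k => (ev_zz' hp0 hp1 hmeasB hmeasD hindep hberB hberD j k).2) hmsN' hintN'
  -- W moments
  have hIn : Integrable (fun ω => if ∀ t, B t ω = false then (1:ℝ) else 0) ℙ :=
    integrable_ite msN
  have hIdn : ∀ u : Fin f,
      Integrable (fun ω => if D u ω = true ∧ ∀ t, B t ω = false then (1:ℝ) else 0) ℙ :=
    fun u => integrable_ite (ev_dn hp0 hp1 hmeasB hmeasD hindep hberB hberD u).1
  have hIddn : ∀ u v : Fin f,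
      Integrable (fun ω =>
        if D u ω = true ∧ D v ω = true ∧ ∀ t, B t ω = false then (1:ℝ) else 0) ℙ :=
    fun u v => integrable_ite (ev_ddn hp0 hp1 hmeasB hmeasD hindep hberB hberD u v).1
  have hW1 : ∀ ω : Ω, ((f:ℝ) - (∑ t, if D t ω = true then (1:ℝ) else 0)/p)
        * (if ∀ t, B t ω = false then (1:ℝ) else 0)
      = f * (if ∀ t, B t ω = false then (1:ℝ) else 0)
        - (1/p) * ∑ t, (if D t ω = true ∧ ∀ u, B u ω = false then (1:ℝ) else 0) := by
    intro ω
    have hdsn : (∑ t, if D t ω = true then (1:ℝ) else 0)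
          * (if ∀ t, B t ω = false then (1:ℝ) else 0)
        = ∑ t, (if D t ω = true ∧ ∀ u, B u ω = false then (1:ℝ) else 0) := by
      rw [Finset.sum_mul]
      exact Finset.sum_congr rfl fun t _ => ite_one_mul'
    calc ((f:ℝ) - (∑ t, if D t ω = true then (1:ℝ) else 0)/p)
          * (if ∀ t, B t ω = false then (1:ℝ) else 0)
        = f * (if ∀ t, B t ω = false then (1:ℝ) else 0)
          - (1/p) * ((∑ t, if D t ω = true then (1:ℝ) else 0)
            * (if ∀ t, B t ω = false then (1:ℝ) else 0)) := by ring
      _ = _ := by rw [hdsn]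
  have hW2 : ∀ ω : Ω, (((f:ℝ) - (∑ t, if D t ω = true then (1:ℝ) else 0)/p)
        * (if ∀ t, B t ω = false then (1:ℝ) else 0))^2
      = f^2 * (if ∀ t, B t ω = false then (1:ℝ) else 0)
        - (2*f/p) * (∑ t, if D t ω = true ∧ ∀ u, B u ω = false then (1:ℝ) else 0)
        + (1/p^2) * ∑ u : Fin f, ∑ v : Fin f,
            (if D u ω = true ∧ D v ω = true ∧ ∀ t, B t ω = false then (1:ℝ) else 0) := by
    intro ω
    set n : ℝ := (if ∀ t, B t ω = false then (1:ℝ) else 0) with hn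
    set S : ℝ := (∑ t, if D t ω = true then (1:ℝ) else 0) with hS
    have hnn : n * n = n := by
      rw [hn]; by_cases h : ∀ t, B t ω = false <;> simp [h]
    have hdsn : S * n = ∑ t, (if D t ω = true ∧ ∀ u, B u ω = false then (1:ℝ) else 0) := by
      rw [hS, Finset.sum_mul]
      exact Finset.sum_congr rfl fun t _ => ite_one_mul'
    have hdsn2 : S * S * n = ∑ u : Fin f, ∑ v : Fin f,
        (if D u ω = true ∧ D v ω = true ∧ ∀ t, B t ω = false then (1:ℝ) else 0) := by
      calc S * S * n = S * (S * n) := by ring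
        _ = (∑ u, if D u ω = true then (1:ℝ) else 0)
            * (∑ v, if D v ω = true ∧ ∀ t, B t ω = false then (1:ℝ) else 0) := by
          rw [← hdsn, hS]
        _ = ∑ u : Fin f, ∑ v : Fin f, ((if D u ω = true then (1:ℝ) else 0)
            * (if D v ω = true ∧ ∀ t, B t ω = false then (1:ℝ) else 0)) :=
          Finset.sum_mul_sum _ _ _ _
        _ = _ := by
          refine Finset.sum_congr rfl fun u _ => Finset.sum_congr rfl fun v _ => ?_
          rw [ite_one_mul']
    calc (((f:ℝ) - S/p) * n)^2
        = f^2 * (n*n) - (2*f/p) * (S * (n*n)) + (1/p^2) * ((S*S) * (n*n)) := by ring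
      _ = f^2 * n - (2*f/p) * (S * n) + (1/p^2) * (S*S*n) := by rw [hnn]
      _ = _ := by rw [hdsn, hdsn2]
  have hIW : Integrable (fun ω => ((f:ℝ)
      - (∑ t, if D t ω = true then (1:ℝ) else 0)/p)
      * (if ∀ t, B t ω = false then (1:ℝ) else 0)) ℙ := by
    have h1 : (fun ω : Ω => ((f:ℝ) - (∑ t, if D t ω = true then (1:ℝ) else 0)/p)
        * (if ∀ t, B t ω = false then (1:ℝ) else 0))
        = fun ω => f * (if ∀ t, B t ω = false then (1:ℝ) else 0)
          - (1/p) * ∑ t, (if D t ω = true ∧ ∀ u, B u ω = false then (1:ℝ) else 0) :=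
      funext hW1
    rw [h1]
    exact (hIn.const_mul _).sub ((integrable_finset_sum _ (fun t _ => hIdn t)).const_mul _)
  have hEW : ∫ ω, (((f:ℝ) - (∑ t, if D t ω = true then (1:ℝ) else 0)/p)
      * (if ∀ t, B t ω = false then (1:ℝ) else 0)) ∂ℙ = 0 := by
    have h0 : ∫ ω, (((f:ℝ) - (∑ t, if D t ω = true then (1:ℝ) else 0)/p)
        * (if ∀ t, B t ω = false then (1:ℝ) else 0)) ∂ℙ
        = ∫ ω, (f * (if ∀ t, B t ω = false then (1:ℝ) else 0)
          - (1/p) * ∑ t, (if D t ω = true ∧ ∀ u, B u ω = false then (1:ℝ) else 0)) ∂ℙ :=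
      integral_congr_ae (Filter.Eventually.of_forall hW1)
    rw [h0, integral_sub (hIn.const_mul _)
      ((integrable_finset_sum _ (fun t _ => hIdn t)).const_mul _),
      integral_const_mul, integral_const_mul, intN,
      integral_finset_sum _ (fun t (_ : t ∈ Finset.univ) => hIdn t),
      Finset.sum_congr rfl (fun t _ =>
        (ev_dn hp0 hp1 hmeasB hmeasD hindep hberB hberD t).2),
      Finset.sum_const, Finset.card_univ, Fintype.card_fin, nsmul_eq_mul]
    field_simp
    ring
  have hIWsq : Integrable (fun ω => (((f:ℝ)
      - (∑ t, if D t ω = true then (1:ℝ) else 0)/p)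
      * (if ∀ t, B t ω = false then (1:ℝ) else 0))^2) ℙ := by
    have h1 : (fun ω : Ω => (((f:ℝ) - (∑ t, if D t ω = true then (1:ℝ) else 0)/p)
        * (if ∀ t, B t ω = false then (1:ℝ) else 0))^2)
        = fun ω => f^2 * (if ∀ t, B t ω = false then (1:ℝ) else 0)
          - (2*f/p) * (∑ t, if D t ω = true ∧ ∀ u, B u ω = false then (1:ℝ) else 0)
          + (1/p^2) * ∑ u : Fin f, ∑ v : Fin f,
              (if D u ω = true ∧ D v ω = true ∧ ∀ t, B t ω = false then (1:ℝ) else 0) :=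
      funext hW2
    rw [h1]
    exact ((hIn.const_mul _).sub
        ((integrable_finset_sum _ (fun t _ => hIdn t)).const_mul _)).add
      ((integrable_finset_sum _ (fun u _ =>
        integrable_finset_sum _ (fun v _ => hIddn u v))).const_mul _)
  have hEWsq : ∫ ω, ((((f:ℝ) - (∑ t, if D t ω = true then (1:ℝ) else 0)/p)
      * (if ∀ t, B t ω = false then (1:ℝ) else 0))^2) ∂ℙ
      = f * (1-p) * (1-p)^f / p := by
    have h0 : ∫ ω, ((((f:ℝ) - (∑ t, if D t ω = true then (1:ℝ) else 0)/p)
        * (if ∀ t, B t ω = false then (1:ℝ) else 0))^2) ∂ℙ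
        = ∫ ω, (f^2 * (if ∀ t, B t ω = false then (1:ℝ) else 0)
          - (2*f/p) * (∑ t, if D t ω = true ∧ ∀ u, B u ω = false then (1:ℝ) else 0)
          + (1/p^2) * ∑ u : Fin f, ∑ v : Fin f,
              (if D u ω = true ∧ D v ω = true ∧ ∀ t, B t ω = false then (1:ℝ) else 0)) ∂ℙ :=
      integral_congr_ae (Filter.Eventually.of_forall hW2)
    have hdbl : (∑ u : Fin f, ∑ v : Fin f, (if u = v then p else p^2) * (1-p)^f)
        = (f * p + f*(f-1)*p^2) * (1-p)^f := by
      have hinner : ∀ u : Fin f, (∑ v : Fin f, (if u = v then p else p^2))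
          = p + (f-1)*p^2 := by
        intro u
        have h1 : ∀ v : Fin f, (if u = v then p else p^2)
            = p^2 + (if u = v then p - p^2 else 0) := by
          intro v; by_cases h : u = v <;> simp [h]
        rw [Finset.sum_congr rfl (fun v _ => h1 v), Finset.sum_add_distrib,
          Finset.sum_const, Finset.card_univ, Fintype.card_fin,
          Finset.sum_ite_eq Finset.univ u (fun _ => p - p^2), if_pos (Finset.mem_univ u),
          nsmul_eq_mul]
        ring
      calc (∑ u : Fin f, ∑ v : Fin f, (if u = v then p else p^2) * (1-p)^f)
          = ∑ _u : Fin f, (p + (f-1)*p^2) * (1-p)^f :=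
            Finset.sum_congr rfl fun u _ => by rw [← Finset.sum_mul, hinner u]
        _ = f * ((p + (f-1)*p^2) * (1-p)^f) := by
            rw [Finset.sum_const, Finset.card_univ, Fintype.card_fin, nsmul_eq_mul]
        _ = (f * p + f*(f-1)*p^2) * (1-p)^f := by ring
    have hIWa : Integrable (fun ω => (f:ℝ)^2
        * (if ∀ t, B t ω = false then (1:ℝ) else 0)
        - (2*f/p) * (∑ t, if D t ω = true ∧ ∀ u, B u ω = false then (1:ℝ) else 0)) ℙ :=
      (hIn.const_mul _).sub ((integrable_finset_sum _ (fun t _ => hIdn t)).const_mul _)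
    have hIWb : Integrable (fun ω => (1/p^2) * ∑ u : Fin f, ∑ v : Fin f,
        (if D u ω = true ∧ D v ω = true ∧ ∀ t, B t ω = false then (1:ℝ) else 0)) ℙ :=
      (integrable_finset_sum _ (fun u _ =>
        integrable_finset_sum _ (fun v _ => hIddn u v))).const_mul _
    rw [h0, integral_add hIWa hIWb,
      integral_sub (hIn.const_mul _)
        ((integrable_finset_sum _ (fun t _ => hIdn t)).const_mul _),
      integral_const_mul, integral_const_mul, integral_const_mul, intN,
      integral_finset_sum _ (fun t (_ : t ∈ Finset.univ) => hIdn t),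
      Finset.sum_congr rfl (fun t _ =>
        (ev_dn hp0 hp1 hmeasB hmeasD hindep hberB hberD t).2),
      Finset.sum_const, Finset.card_univ, Fintype.card_fin, nsmul_eq_mul,
      integral_finset_sum _ (fun u (_ : u ∈ Finset.univ) =>
        integrable_finset_sum _ (fun v (_ : v ∈ Finset.univ) => hIddn u v)),
      Finset.sum_congr rfl (fun u (_ : u ∈ Finset.univ) =>
        integral_finset_sum _ (fun v (_ : v ∈ Finset.univ) => hIddn u v)),
      Finset.sum_congr rfl (fun u (_ : u ∈ Finset.univ) =>
        Finset.sum_congr rfl (fun v (_ : v ∈ Finset.univ) =>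
          (ev_ddn hp0 hp1 hmeasB hmeasD hindep hberB hberD u v).2)), hdbl]
    field_simp
    ring
  -- expectation of the estimator
  have hIg : Integrable (fhatPrime f p B D) ℙ := by
    have h1 : fhatPrime f p B D
        = fun ω => f + (1/p - firstSuccess f p B ω)
          + (1/p - firstSuccess f p (fun t => B t.rev) ω)
          + ((f : ℝ) - (∑ t, if D t ω = true then (1:ℝ) else 0)/p)
            * (if ∀ t, B t ω = false then 1 else 0) :=
      funext (fhat_eq p B D)
    rw [h1]
    exact (((integrable_const _).add hIu1).add hIu2).add hIW
  have hEg : (∫ ω, fhatPrime f p B D ω ∂ℙ) = f := by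
    have h0 : (∫ ω, fhatPrime f p B D ω ∂ℙ)
        = ∫ ω, ((f:ℝ) + (1/p - firstSuccess f p B ω)
          + (1/p - firstSuccess f p (fun t => B t.rev) ω)
          + ((f : ℝ) - (∑ t, if D t ω = true then (1:ℝ) else 0)/p)
            * (if ∀ t, B t ω = false then 1 else 0)) ∂ℙ :=
      integral_congr_ae (Filter.Eventually.of_forall (fhat_eq p B D))
    have hIfu1 : Integrable (fun ω => (f:ℝ) + (1/p - firstSuccess f p B ω)) ℙ :=
      (integrable_const _).add hIu1
    have hIfu12 : Integrable (fun ω => (f:ℝ) + (1/p - firstSuccess f p B ω)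
        + (1/p - firstSuccess f p (fun t => B t.rev) ω)) ℙ := hIfu1.add hIu2
    rw [h0, integral_add hIfu12 hIW, integral_add hIfu1 hIu2,
      integral_add (integrable_const _) hIu1,
      integral_const, hEu1, hEu2, hEW]
    simp
  refine ⟨hEg, ?_⟩
  -- boundedness and Memℒp
  have hgb : ∀ ω : Ω, ‖fhatPrime f p B D ω‖
      ≤ (f:ℝ) + (f + 1/p) + (f + 1/p) + (f + f/p) := by
    intro ω
    have hb1 := firstSuccess_bounds hp0 hp1 B ω
    have hb2 := firstSuccess_bounds hp0 hp1 (fun t => B t.rev) ω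
    have h1p : (1:ℝ) ≤ 1/p := by rw [le_div_iff₀ hp0]; linarith
    have hds : (0:ℝ) ≤ (∑ t, if D t ω = true then (1:ℝ) else 0)
        ∧ (∑ t, if D t ω = true then (1:ℝ) else 0) ≤ f := by
      constructor
      · exact Finset.sum_nonneg fun t _ => by positivity
      · calc (∑ t, if D t ω = true then (1:ℝ) else 0) ≤ ∑ _t : Fin f, (1:ℝ) :=
            Finset.sum_le_sum fun t _ => by split <;> norm_num
          _ = f := by simp
    have hdsp : (∑ t, if D t ω = true then (1:ℝ) else 0)/p ≤ f/p :=
      (div_le_div_iff_of_pos_right hp0).mpr hds.2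
    have hdsp0 : (0:ℝ) ≤ (∑ t, if D t ω = true then (1:ℝ) else 0)/p :=
      div_nonneg hds.1 hp0.le
    have hf0 : (0:ℝ) ≤ f := Nat.cast_nonneg f
    have hfp0 : (0:ℝ) ≤ (f:ℝ)/p := div_nonneg hf0 hp0.le
    rw [Real.norm_eq_abs, fhat_eq p B D ω]
    by_cases hN : ∀ t, B t ω = false
    · rw [if_pos hN, mul_one, abs_le]
      constructor <;> linarith [hb1.1, hb1.2, hb2.1, hb2.2]
    · rw [if_neg hN, mul_zero, add_zero, abs_le]
      constructor <;> linarith [hb1.1, hb1.2, hb2.1, hb2.2]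
  have hMem : MemLp (fhatPrime f p B D) 2 ℙ :=
    MemLp.of_bound hIg.aestronglyMeasurable _ (Filter.Eventually.of_forall hgb)
  have hvar : variance (fhatPrime f p B D) ℙ
      = ∫ ω, (fhatPrime f p B D ω - f)^2 ∂ℙ := by
    rw [variance_eq_integral hMem.aestronglyMeasurable.aemeasurable]
    refine integral_congr_ae (Filter.Eventually.of_forall fun ω => ?_)
    simp only [Pi.pow_apply, Pi.sub_apply]
    rw [hEg]
  have hdecomp : ∀ ω : Ω, fhatPrime f p B D ω - f
      = (1/p - firstSuccess f p B ω)
        + (1/p - firstSuccess f p (fun t => B t.rev) ω)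
        + ((f : ℝ) - (∑ t, if D t ω = true then (1:ℝ) else 0)/p)
          * (if ∀ t, B t ω = false then 1 else 0) := by
    intro ω
    rw [fhat_eq p B D ω]
    ring
  have hptsq : ∀ ω : Ω, (fhatPrime f p B D ω - f)^2
      ≤ 3*(1/p - firstSuccess f p B ω)^2
        + 3*(1/p - firstSuccess f p (fun t => B t.rev) ω)^2
        + 3*(((f : ℝ) - (∑ t, if D t ω = true then (1:ℝ) else 0)/p)
          * (if ∀ t, B t ω = false then 1 else 0))^2 := by
    intro ω
    rw [hdecomp ω]
    set a := 1/p - firstSuccess f p B ω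
    set b := 1/p - firstSuccess f p (fun t => B t.rev) ω
    set c := ((f : ℝ) - (∑ t, if D t ω = true then (1:ℝ) else 0)/p)
      * (if ∀ t, B t ω = false then (1:ℝ) else 0)
    nlinarith [sq_nonneg (a - b), sq_nonneg (a - c), sq_nonneg (b - c)]
  have hIgsq : Integrable (fun ω => (fhatPrime f p B D ω - f)^2) ℙ :=
    (hMem.sub (memLp_const (f:ℝ))).integrable_sq
  have hI3a : Integrable (fun ω => 3*(1/p - firstSuccess f p B ω)^2) ℙ :=
    hIu1sq.const_mul 3
  have hI3b : Integrable
      (fun ω => 3*(1/p - firstSuccess f p (fun t => B t.rev) ω)^2) ℙ :=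
    hIu2sq.const_mul 3
  have hI3c : Integrable (fun ω => 3*(((f : ℝ)
      - (∑ t, if D t ω = true then (1:ℝ) else 0)/p)
      * (if ∀ t, B t ω = false then (1:ℝ) else 0))^2) ℙ :=
    hIWsq.const_mul 3
  have hI3ab : Integrable (fun ω => 3*(1/p - firstSuccess f p B ω)^2
      + 3*(1/p - firstSuccess f p (fun t => B t.rev) ω)^2) ℙ := hI3a.add hI3b
  have hIrhs : Integrable (fun ω => 3*(1/p - firstSuccess f p B ω)^2
      + 3*(1/p - firstSuccess f p (fun t => B t.rev) ω)^2
      + 3*(((f : ℝ) - (∑ t, if D t ω = true then (1:ℝ) else 0)/p)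
        * (if ∀ t, B t ω = false then (1:ℝ) else 0))^2) ℙ := hI3ab.add hI3c
  have hmono := integral_mono hIgsq hIrhs hptsq
  have hsplit : (∫ ω, (3*(1/p - firstSuccess f p B ω)^2
      + 3*(1/p - firstSuccess f p (fun t => B t.rev) ω)^2
      + 3*(((f : ℝ) - (∑ t, if D t ω = true then (1:ℝ) else 0)/p)
        * (if ∀ t, B t ω = false then (1:ℝ) else 0))^2) ∂ℙ)
      = 3*((1-p) * (1 - (1-p)^f) / p^2) + 3*((1-p) * (1 - (1-p)^f) / p^2)
        + 3*(f * (1-p) * (1-p)^f / p) := by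
    rw [integral_add hI3ab hI3c, integral_add hI3a hI3b, integral_const_mul,
      integral_const_mul, integral_const_mul, hEu1sq, hEu2sq, hEWsq]
  have hr0 : (0:ℝ) ≤ (1-p)^f := pow_nonneg (by linarith) f
  have hr1 : (1-p)^f ≤ 1 := pow_le_one₀ (by linarith) (by linarith)
  have hb1 : (1-p) * (1 - (1-p)^f) / p^2 ≤ 1/p^2 := by
    rw [div_le_div_iff₀ (by positivity) (by positivity)]
    nlinarith [mul_nonneg (mul_nonneg (show (0:ℝ) ≤ 1-p by linarith) hr0) (sq_nonneg p),
      mul_nonneg (mul_nonneg hp0.le (show (0:ℝ) ≤ 1 - (1-p)^f by linarith)) (sq_nonneg p),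
      mul_nonneg hp0.le (sq_nonneg p), sq_nonneg p]
  have hqp : (0:ℝ) ≤ (1-p)/p := div_nonneg (by linarith) hp0.le
  have hb3 : f * (1-p) * (1-p)^f / p ≤ 1/p^2 := by
    have hbb := bern_bound hp0 hp1 f
    calc f * (1-p) * (1-p)^f / p = (f * (1-p)^f) * ((1-p)/p) := by ring
      _ ≤ ((1-p)/p) * ((1-p)/p) := mul_le_mul_of_nonneg_right hbb hqp
      _ = (1-p)^2/p^2 := by ring
      _ ≤ 1/p^2 := by
          rw [div_le_div_iff₀ (by positivity) (by positivity)]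
          nlinarith [mul_nonneg (mul_nonneg hp0.le (show (0:ℝ) ≤ 2 - p by linarith))
            (sq_nonneg p), sq_nonneg p]
  calc variance (fhatPrime f p B D) ℙ
      = ∫ ω, (fhatPrime f p B D ω - f)^2 ∂ℙ := hvar
    _ ≤ ∫ ω, (3*(1/p - firstSuccess f p B ω)^2
        + 3*(1/p - firstSuccess f p (fun t => B t.rev) ω)^2
        + 3*(((f : ℝ) - (∑ t, if D t ω = true then (1:ℝ) else 0)/p)
          * (if ∀ t, B t ω = false then (1:ℝ) else 0))^2) ∂ℙ := hmono
    _ = 3*((1-p) * (1 - (1-p)^f) / p^2) + 3*((1-p) * (1 - (1-p)^f) / p^2)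
        + 3*(f * (1-p) * (1-p)^f / p) := hsplit
    _ ≤ 16 / p^2 := by
        have e1 : (16:ℝ)/p^2 = 16*(1/p^2) := by ring
        have e0 : (0:ℝ) ≤ 1/p^2 := by positivity
        rw [e1]
        linarith [hb1, hb3]
end
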